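/- arXiv:1402.4718 — 6 statements merged into one kernel-verified Lean document; each statement's English description precedes it below -/
import Mathlib

section
/- Let {x,y} be a minimal separator in a planar graph G. Then any graph obtained from an induced subgraph of G (containing x and y) by adding either the edge {x,y} or an xy-path consisting of new interior vertices of degree two is planar. -/
/-!
Planarity is defined by excluding `K₅` and `K₃,₃` minors. Both graphs have minimum degree three
and stay connected after deleting any two vertices, and for every such `H` a branch-set model of
`H` in the extension can be moved into `G`.

First the path is contracted: by the degree condition no branch set lies inside the new path, so
a branch set meeting the path contains `x` or `y`, and collapsing its path vertices onto that
endpoint gives a model in `G + xy`. Then the edge `xy` is removed: since `{x, y}` is a minimal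
separator, `G - {x, y}` has two disjoint full components. If `x ∈ B i₁` and `y ∈ B i₂`, the
connectivity of `H - {i₁, i₂}` allows at most one of them to contain a whole branch set; the
other one, added to `B i₁` and cut out of all other branch sets, replaces the edge `xy` by a path.
-/

open SimpleGraph

variable {V : Type*}

/-- Reachability within the subgraph of `G` induced by the vertex set `W`. -/
def ReachIn (G : SimpleGraph V) (W : Set V) (x y : V) : Prop :=
  ∃ (hx : x ∈ W) (hy : y ∈ W), (G.induce W).Reachable ⟨x, hx⟩ ⟨y, hy⟩

/-- Removing `S` disconnects some connected component of `G`: there are two vertices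
outside `S` that are connected in `G` but not in `G - S`. -/
def Separates (G : SimpleGraph V) (S : Set V) : Prop :=
  ∃ u v : V, u ∉ S ∧ v ∉ S ∧ G.Reachable u v ∧ ¬ ReachIn G Sᶜ u v

/-- `S` is a minimal separator of `G`. -/
def IsMinimalSeparator (G : SimpleGraph V) (S : Set V) : Prop :=
  Separates G S ∧ ∀ S' ⊂ S, ¬ Separates G S'

/-- `C` is a connected component of the subgraph of `G` induced by `W`. -/
def IsCompOf (G : SimpleGraph V) (C W : Set V) : Prop :=
  C ⊆ W ∧ (G.induce C).Connected ∧ ∀ u ∈ C, ∀ v ∈ W, G.Adj u v → v ∈ C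

/-- A separation `(A, B)` of a graph `G`. -/
def IsSeparation (G : SimpleGraph V) (A B : Set V) : Prop :=
  A ∪ B = Set.univ ∧ ∀ u ∈ A \ B, ∀ v ∈ B \ A, ¬ G.Adj u v

/-- `(T, X)` is a tree decomposition of `G`. -/
structure IsTreeDecomp {ι : Type*} (G : SimpleGraph V) (T : SimpleGraph ι)
    (X : ι → Set V) : Prop where
  isTree : T.IsTree
  covers_verts : ∀ v : V, ∃ i, v ∈ X i
  covers_edges : ∀ ⦃u v : V⦄, G.Adj u v → ∃ i, u ∈ X i ∧ v ∈ X i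
  subtree : ∀ v : V, (T.induce {i | v ∈ X i}).Connected

/-- The tree decomposition given by the bag function `X` has adhesion at most `d`. -/
def AdhesionLE {ι : Type*} (T : SimpleGraph ι) (X : ι → Set V) (d : ℕ) : Prop :=
  ∀ ⦃i j : ι⦄, T.Adj i j → (X i ∩ X j).ncard ≤ d

/-- The torso of the vertex set `W` in `G`: the induced subgraph `G[W]` with an edge added
between each pair of vertices of `W` connected by a path internally avoiding `W`. -/
def torso (G : SimpleGraph V) (W : Set V) : SimpleGraph W :=
  SimpleGraph.fromRel (fun u v =>
    G.Adj u v ∨ ∃ p : G.Walk (u : V) (v : V), p.IsPath ∧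
      ∀ z ∈ p.support, z ≠ (u : V) → z ≠ (v : V) → z ∉ W)

/-- One smoothing step: `K` is obtained from `H` by replacing the degree-2 vertex `v`,
whose two neighbors are `a` and `b`, by a direct edge between `a` and `b`. -/
def SmoothStep (H K : SimpleGraph.Subgraph (⊤ : SimpleGraph V)) : Prop :=
  ∃ v a b : V, a ≠ b ∧ a ≠ v ∧ b ≠ v ∧ v ∈ H.verts ∧ H.neighborSet v = {a, b} ∧
    K.verts = H.verts \ {v} ∧
    ∀ x y : V, K.Adj x y ↔ ((H.Adj x y ∧ x ≠ v ∧ y ≠ v) ∨ (x = a ∧ y = b) ∨ (x = b ∧ y = a))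

/-- `K` (a graph on a subset of the vertices of `G`) is a topological minor of `G`:
it is obtained from a subgraph of `G` by repeatedly smoothing degree-2 vertices. -/
def IsTopMinor (K : SimpleGraph.Subgraph (⊤ : SimpleGraph V)) (G : SimpleGraph V) : Prop :=
  ∃ H₀ : SimpleGraph.Subgraph (⊤ : SimpleGraph V),
    (∀ ⦃x y : V⦄, H₀.Adj x y → G.Adj x y) ∧ Relation.ReflTransGen SmoothStep H₀ K

/-- An abstract graph `H` is a topological minor of `G` if it is isomorphic to some
topological minor of `G`. -/
def IsTopMinorGraph {W : Type*} (H : SimpleGraph W) (G : SimpleGraph V) : Prop :=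
  ∃ K : SimpleGraph.Subgraph (⊤ : SimpleGraph V), IsTopMinor K G ∧ Nonempty (H ≃g K.coe)

/-- One edge-contraction step: `K` is obtained from `H` by contracting the edge `{a, b}`
(the vertex `b` is merged into `a`). -/
def ContractStep (H K : SimpleGraph.Subgraph (⊤ : SimpleGraph V)) : Prop :=
  ∃ a b : V, H.Adj a b ∧ K.verts = H.verts \ {b} ∧
    ∀ x y : V, K.Adj x y ↔ (x ≠ b ∧ y ≠ b ∧ x ≠ y ∧
      (H.Adj x y ∨ (x = a ∧ H.Adj b y) ∨ (y = a ∧ H.Adj x b)))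

/-- `G` contains `Hpat` as a minor: some graph obtained from a subgraph of `G` by
contracting edges is isomorphic to `Hpat`. -/
def HasMinor {W : Type*} (G : SimpleGraph V) (Hpat : SimpleGraph W) : Prop :=
  ∃ H₀ K : SimpleGraph.Subgraph (⊤ : SimpleGraph V),
    (∀ ⦃x y : V⦄, H₀.Adj x y → G.Adj x y) ∧ Relation.ReflTransGen ContractStep H₀ K ∧
      Nonempty (Hpat ≃g K.coe)

/-- Planarity, via Wagner's theorem: no `K₅`-minor and no `K₃,₃`-minor. -/
def IsPlanar (G : SimpleGraph V) : Prop :=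
  ¬ HasMinor G (completeGraph (Fin 5)) ∧ ¬ HasMinor G (completeBipartiteGraph (Fin 3) (Fin 3))

/-- A graph is triconnected if removing fewer than three vertices cannot disconnect it. -/
def Triconnected (G : SimpleGraph V) : Prop :=
  ∀ S : Set V, S.ncard < 3 → (G.induce Sᶜ).Preconnected

/-- A graph is claw-free if it has no induced `K_{1,3}`. -/
def ClawFree (G : SimpleGraph V) : Prop :=
  ∀ v a b c : V, G.Adj v a → G.Adj v b → G.Adj v c → a ≠ b → a ≠ c → b ≠ c →
    ¬ G.Adj a b → ¬ G.Adj a c → G.Adj b c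

/-- The `xy`-extension of `G` determined by the induced subgraph on `D ∋ x, y` and `n` new
interior path vertices: for `n = 0` the edge `{x,y}` is added, otherwise an `xy`-path
through `n` new vertices of degree two is added. -/
def ExtGraph (G : SimpleGraph V) (D : Set V) (x y : V) (n : ℕ) :
    SimpleGraph (↥D ⊕ Fin n) :=
  SimpleGraph.fromRel (fun a b =>
    match a, b with
    | Sum.inl u, Sum.inl v => G.Adj u v ∨ (n = 0 ∧ (u : V) = x ∧ (v : V) = y)
    | Sum.inl u, Sum.inr p => ((u : V) = x ∧ (p : ℕ) = 0) ∨ ((u : V) = y ∧ (p : ℕ) = n - 1)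
    | Sum.inr p, Sum.inr q => (q : ℕ) = (p : ℕ) + 1
    | _, _ => False)

namespace SimpleGraph

variable {W : Type*}

def ReachOn (G : SimpleGraph V) (B : Set V) (a b : V) : Prop :=
  Relation.ReflTransGen (fun u v => u ∈ B ∧ v ∈ B ∧ G.Adj u v) a b

def ConnectedOn (G : SimpleGraph V) (B : Set V) : Prop :=
  ∀ a ∈ B, ∀ b ∈ B, G.ReachOn B a b

section ReachOn

variable {V' : Type*} {G : SimpleGraph V} {G' : SimpleGraph V'} {B C S : Set V} {a b c y : V}

@[refl]
lemma ReachOn.refl : G.ReachOn B a a := Relation.ReflTransGen.refl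

lemma ReachOn.single (ha : a ∈ B) (hb : b ∈ B) (hab : G.Adj a b) : G.ReachOn B a b :=
  Relation.ReflTransGen.single ⟨ha, hb, hab⟩

lemma ReachOn.trans (h₁ : G.ReachOn B a b) (h₂ : G.ReachOn B b c) : G.ReachOn B a c :=
  Relation.ReflTransGen.trans h₁ h₂

lemma ReachOn.symm (h : G.ReachOn B a b) : G.ReachOn B b a := by
  induction h with
  | refl => rfl
  | tail _ hcd ih => exact (ReachOn.single hcd.2.1 hcd.1 hcd.2.2.symm).trans ih

lemma ReachOn.lift {B' : Set V'} (f : V → V')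
    (hf : ∀ a ∈ B, ∀ b ∈ B, G.Adj a b → G'.ReachOn B' (f a) (f b)) (h : G.ReachOn B a b) :
    G'.ReachOn B' (f a) (f b) :=
  Relation.ReflTransGen.lift' f (fun a b h => hf a h.1 b h.2.1 h.2.2) _ _ h

lemma ReachOn.mono (hBC : B ⊆ C) (h : G.ReachOn B a b) : G.ReachOn C a b :=
  h.lift id fun _ ha _ hb hab => .single (hBC ha) (hBC hb) hab

lemma ReachOn.mono_graph {G₂ : SimpleGraph V} (hG : ∀ a ∈ B, ∀ b ∈ B, G.Adj a b → G₂.Adj a b)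
    (h : G.ReachOn B a b) : G₂.ReachOn B a b :=
  h.lift id fun a ha b hb hab => .single ha hb (hG a ha b hb hab)

lemma ReachOn.exists_boundary_adj (h : G.ReachOn B a b) (ha : a ∈ C) (hb : b ∉ C) :
    ∃ w ∈ C, ∃ w' ∉ C, w ∈ B ∧ w' ∈ B ∧ G.Adj w w' := by
  induction h with
  | refl => exact absurd ha hb
  | @tail c d _ hcd ih =>
    by_cases hc : c ∈ C
    · exact ⟨c, hc, d, hb, hcd⟩
    · exact ih hc

lemma ReachOn.mem_of_closed (h : G.ReachOn B a b) (ha : a ∈ C)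
    (hC : ∀ w ∈ C, ∀ w' ∈ B, G.Adj w w' → w' ∈ C) : b ∈ C := by
  by_contra hb
  obtain ⟨w, hw, w', hw', -, hw'B, hww'⟩ := h.exists_boundary_adj ha hb
  exact hw' (hC w hw w' hw'B hww')

lemma reachIn_iff_reachOn : ReachIn G B a b ↔ a ∈ B ∧ b ∈ B ∧ G.ReachOn B a b := by
  constructor
  · rintro ⟨ha, hb, hr⟩
    exact ⟨ha, hb, Relation.ReflTransGen.lift' Subtype.val
      (fun u v huv => Relation.ReflTransGen.single ⟨u.2, v.2, huv⟩) _ _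
      ((reachable_iff_reflTransGen _ _).mp hr)⟩
  · rintro ⟨ha, hb, hr⟩
    suffices ∀ c (hc : c ∈ B), G.ReachOn B a c → (G.induce B).Reachable ⟨a, ha⟩ ⟨c, hc⟩ from
      ⟨ha, hb, this b hb hr⟩
    intro c hc h
    induction h with
    | refl => rfl
    | tail _ hcd ih => exact (ih hcd.1).trans (Adj.reachable (G := G.induce B) hcd.2.2)

lemma connectedOn_of_reachOn {z : V} (h : ∀ a ∈ B, G.ReachOn B a z) : G.ConnectedOn B :=
  fun a ha b hb => (h a ha).trans (h b hb).symm

lemma connectedOn_singleton (v : V) : G.ConnectedOn {v} := by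
  rintro a rfl b rfl
  rfl

lemma ConnectedOn.union {B₁ B₂ : Set V} (h₁ : G.ConnectedOn B₁) (h₂ : G.ConnectedOn B₂)
    (ha : a ∈ B₁) (hb : b ∈ B₂) (hab : G.Adj a b) : G.ConnectedOn (B₁ ∪ B₂) := by
  refine connectedOn_of_reachOn (z := a) ?_
  rintro c (hc | hc)
  · exact (h₁ c hc a ha).mono Set.subset_union_left
  · exact ((h₂ c hc b hb).mono Set.subset_union_right).trans
      (.single (Or.inr hb) (Or.inl ha) hab.symm)

lemma ConnectedOn.image (f : V → V') (h : G.ConnectedOn B)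
    (hf : ∀ a ∈ B, ∀ b ∈ B, G.Adj a b → f a = f b ∨ G'.Adj (f a) (f b)) :
    G'.ConnectedOn (f '' B) := by
  rintro _ ⟨a, ha, rfl⟩ _ ⟨b, hb, rfl⟩
  refine (h a ha b hb).lift f fun c hc d hd hcd => ?_
  rcases hf c hc d hd hcd with hfcd | hfcd
  · rw [hfcd]
  · exact .single ⟨c, hc, rfl⟩ ⟨d, hd, rfl⟩ hfcd

lemma ConnectedOn.sdiff_of_adj_eq (hB : G.ConnectedOn B) (hy : y ∈ B)
    (hC : ∀ a ∈ C, ∀ b ∈ B, b ∉ C → G.Adj a b → b = y) : G.ConnectedOn (B \ C) := by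
  refine connectedOn_of_reachOn (z := y) fun w hw => ?_
  suffices ∀ w, G.ReachOn B w y → w ∉ C → G.ReachOn (B \ C) w y from this w (hB w hw.1 y hy) hw.2
  intro w h
  induction h using Relation.ReflTransGen.head_induction_on with
  | refl => exact fun _ => .refl
  | @head w m hwm _ ih =>
    intro hwC
    by_cases hmC : m ∈ C
    · rw [hC m hmC w hwm.1 hwC hwm.2.2.symm]
    · exact (ReachOn.single (B := B \ C) ⟨hwm.1, hwC⟩ ⟨hwm.2.1, hmC⟩ hwm.2.2).trans (ih hmC)

lemma ConnectedOn.inter_nonempty_of_closed (hB : G.ConnectedOn B)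
    (hC : ∀ ⦃a b⦄, a ∈ C → G.Adj a b → b ∈ C ∨ b ∈ S) (hBC : (B ∩ C).Nonempty)
    (hBC' : ¬ B ⊆ C) : (B ∩ S).Nonempty := by
  obtain ⟨a, haB, haC⟩ := hBC
  obtain ⟨b, hbB, hbC⟩ := Set.not_subset.mp hBC'
  obtain ⟨w, hw, w', hw', -, hw'B, hww'⟩ := (hB a haB b hbB).exists_boundary_adj haC hbC
  exact ⟨w', hw'B, (hC hw hww').resolve_left hw'⟩

end ReachOn

lemma Preconnected.subset_of_closed {H : SimpleGraph W} {T I : Set W}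
    (hT : (H.induce T).Preconnected) {i₀ : W} (hi₀T : i₀ ∈ T) (hi₀I : i₀ ∈ I)
    (hI : ∀ i ∈ T, i ∈ I → ∀ j ∈ T, H.Adj i j → j ∈ I) :
    T ⊆ I := by
  intro j hjT
  by_contra hjI
  obtain ⟨d, -, hd, hd'⟩ := (hT ⟨i₀, hi₀T⟩ ⟨j, hjT⟩).some.exists_boundary_dart
    {k | (k : W) ∈ I} hi₀I hjI
  exact hd' (hI _ d.fst.2 hd _ d.snd.2 d.adj)

section SupEdge

variable {G : SimpleGraph V} {x y a b : V} {B : Set V}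

lemma adj_of_sup_edge_adj_of_ne (h : (G ⊔ edge x y).Adj a b) (ha : a ≠ x) (hb : b ≠ x) :
    G.Adj a b :=
  h.resolve_right fun he => by
    rcases ((edge_adj ..).mp he).1 with ⟨rfl, -⟩ | ⟨-, rfl⟩
    exacts [ha rfl, hb rfl]

lemma adj_of_sup_edge_adj_of_notMem (h : (G ⊔ edge x y).Adj a b) (hb : b ∉ ({x, y} : Set V)) :
    G.Adj a b :=
  h.resolve_right fun he => by
    rcases ((edge_adj ..).mp he).1 with ⟨-, rfl⟩ | ⟨-, rfl⟩
    exacts [hb (Or.inr rfl), hb (Or.inl rfl)]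

lemma ReachOn.of_sup_edge {B' : Set V} (h : (G ⊔ edge x y).ReachOn B a b) (hBB' : B ⊆ B')
    (hxy : x ∈ B → y ∈ B → G.ReachOn B' x y) : G.ReachOn B' a b := by
  refine h.lift id fun c hc d hd hcd => ?_
  rcases hcd with hcd | hcd
  · exact .single (hBB' hc) (hBB' hd) hcd
  · rcases ((edge_adj ..).mp hcd).1 with ⟨rfl, rfl⟩ | ⟨rfl, rfl⟩
    exacts [hxy hc hd, (hxy hd hc).symm]

end SupEdge

section MinorModel

structure IsMinorModel (G : SimpleGraph V) (H : SimpleGraph W) (B : W → Set V) : Prop where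
  nonempty : ∀ i, (B i).Nonempty
  connectedOn : ∀ i, G.ConnectedOn (B i)
  disjoint : Pairwise fun i j => Disjoint (B i) (B j)
  exists_adj : ∀ ⦃i j⦄, H.Adj i j → ∃ a ∈ B i, ∃ b ∈ B j, G.Adj a b

namespace IsMinorModel

variable {G : SimpleGraph V} {H : SimpleGraph W} {B : W → Set V}

lemma eq_of_mem (hB : G.IsMinorModel H B) {a : V} {i j : W} (hi : a ∈ B i) (hj : a ∈ B j) :
    i = j := by
  by_contra hij
  exact Set.disjoint_left.mp (hB.disjoint hij) hi hj

lemma comp_iso {W' : Type*} {H' : SimpleGraph W'} (hB : G.IsMinorModel H B) (e : H' ≃g H) :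
    G.IsMinorModel H' (B ∘ e) where
  nonempty i := hB.nonempty (e i)
  connectedOn i := hB.connectedOn (e i)
  disjoint _ _ hij := hB.disjoint (e.injective.ne hij)
  exists_adj _ _ hij := hB.exists_adj (e.map_adj_iff.mpr hij)

end IsMinorModel

variable {G : SimpleGraph V} {H : SimpleGraph W}

lemma isMinorModel_singleton {K : (⊤ : SimpleGraph V).Subgraph}
    (hK : ∀ ⦃u v : V⦄, K.Adj u v → G.Adj u v) :
    G.IsMinorModel K.coe (fun v => {v.1}) where
  nonempty _ := Set.singleton_nonempty _
  connectedOn _ := connectedOn_singleton _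
  disjoint _ _ huv := Set.disjoint_singleton.mpr (Subtype.coe_injective.ne huv)
  exists_adj u v huv := ⟨u, rfl, v, rfl, hK huv⟩

open Classical in
def mergeInto (B : V → Set V) (a b v : V) : Set V := if v = a then B a ∪ B b else B v

lemma subset_mergeInto (B : V → Set V) (a b v : V) : B v ⊆ mergeInto B a b v := by
  by_cases hv : v = a
  · subst hv
    simp [mergeInto]
  · simp [mergeInto, hv]

lemma subset_mergeInto_self (B : V → Set V) (a b : V) : B b ⊆ mergeInto B a b a := by
  simp [mergeInto]

lemma mem_mergeInto {B : V → Set V} {a b v c : V} (hc : c ∈ mergeInto B a b v) :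
    c ∈ B v ∨ (v = a ∧ c ∈ B b) := by
  by_cases hv : v = a
  · subst hv
    simpa [mergeInto] using hc
  · simpa [mergeInto, hv] using hc

lemma IsMinorModel.of_contractStep {K K' : (⊤ : SimpleGraph V).Subgraph} {B : V → Set V}
    (hB : G.IsMinorModel K.coe (fun v => B v)) (hKK' : ContractStep K K') :
    ∃ B' : V → Set V, G.IsMinorModel K'.coe (fun v => B' v) := by
  obtain ⟨a, b, hab, hverts, hadj⟩ := hKK'
  have hvert : ∀ v ∈ K'.verts, v ∈ K.verts ∧ v ≠ b := fun v hv => by simpa [hverts] using hv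
  have heq : ∀ {u v c : V} (hu : u ∈ K.verts) (hv : v ∈ K.verts), c ∈ B u → c ∈ B v → u = v :=
    fun hu hv h₁ h₂ => congrArg Subtype.val (hB.eq_of_mem (i := ⟨_, hu⟩) (j := ⟨_, hv⟩) h₁ h₂)
  refine ⟨mergeInto B a b, ⟨fun v => (hB.nonempty ⟨v, (hvert v v.2).1⟩).mono
    (subset_mergeInto B a b v), fun v => ?_, fun u v huv => ?_, fun u v huv => ?_⟩⟩
  · by_cases hv : (v : V) = a
    · obtain ⟨a', ha', b', hb', hab'⟩ :=
        hB.exists_adj (i := ⟨a, hab.fst_mem⟩) (j := ⟨b, hab.snd_mem⟩) hab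
      simpa [mergeInto, hv] using (hB.connectedOn _).union (hB.connectedOn _) ha' hb' hab'
    · simpa [mergeInto, hv] using hB.connectedOn ⟨v, (hvert v v.2).1⟩
  · refine Set.disjoint_left.mpr fun c hcu hcv => huv (Subtype.ext ?_)
    obtain ⟨hu, hub⟩ := hvert u u.2
    obtain ⟨hv, hvb⟩ := hvert v v.2
    rcases mem_mergeInto hcu with hcu | ⟨hua, hcu⟩ <;>
      rcases mem_mergeInto hcv with hcv | ⟨hva, hcv⟩
    · exact heq hu hv hcu hcv
    · exact absurd (heq hu hab.snd_mem hcu hcv) hub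
    · exact absurd (heq hv hab.snd_mem hcv hcu) hvb
    · exact hua.trans hva.symm
  · have hu := (hvert u u.2).1
    have hv := (hvert v v.2).1
    rcases ((hadj u v).mp huv).2.2.2 with huv' | ⟨hua, hbv⟩ | ⟨hva, hub⟩
    · obtain ⟨a', ha', b', hb', h⟩ := hB.exists_adj (i := ⟨u, hu⟩) (j := ⟨v, hv⟩) huv'
      exact ⟨a', subset_mergeInto B a b u ha', b', subset_mergeInto B a b v hb', h⟩
    · obtain ⟨a', ha', b', hb', h⟩ := hB.exists_adj (i := ⟨b, hab.snd_mem⟩) (j := ⟨v, hv⟩) hbv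
      exact ⟨a', hua ▸ subset_mergeInto_self B a b ha', b', subset_mergeInto B a b v hb', h⟩
    · obtain ⟨a', ha', b', hb', h⟩ := hB.exists_adj (i := ⟨u, hu⟩) (j := ⟨b, hab.snd_mem⟩) hub
      exact ⟨a', subset_mergeInto B a b u ha', b', hva ▸ subset_mergeInto_self B a b hb', h⟩

lemma HasMinor.exists_isMinorModel (h : HasMinor G H) : ∃ B : W → Set V, G.IsMinorModel H B := by
  obtain ⟨K₀, K, hK₀, hK, ⟨e⟩⟩ := h
  obtain ⟨B, hB⟩ : ∃ B : V → Set V, G.IsMinorModel K.coe (fun v => B v) := by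
    clear e
    induction hK with
    | refl => exact ⟨fun v => {v}, isMinorModel_singleton hK₀⟩
    | tail _ hstep ih =>
      obtain ⟨B, hB⟩ := ih
      exact hB.of_contractStep hstep
  exact ⟨_, hB.comp_iso e⟩

end MinorModel

section Contraction

namespace Subgraph

def contractBy (K : (⊤ : SimpleGraph V).Subgraph) (f : V → V) :
    (⊤ : SimpleGraph V).Subgraph where
  verts := f '' K.verts
  Adj u v := u ≠ v ∧ ∃ a b, K.Adj a b ∧ f a = u ∧ f b = v
  adj_sub h := h.1
  edge_vert := by
    rintro _ _ ⟨-, a, b, hab, rfl, -⟩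
    exact ⟨a, hab.fst_mem, rfl⟩
  symm := ⟨fun _ _ ⟨huv, a, b, hab, ha, hb⟩ => ⟨huv.symm, b, a, hab.symm, hb, ha⟩⟩

variable {K : (⊤ : SimpleGraph V).Subgraph}

lemma contractBy_id : K.contractBy id = K := by
  ext u v
  · simp [contractBy]
  · simp only [contractBy]
    exact ⟨fun ⟨_, a, b, hab, ha, hb⟩ => ha ▸ hb ▸ hab, fun h => ⟨h.ne, u, v, h, rfl, rfl⟩⟩

lemma contractStep_contractBy [DecidableEq V] {f : V → V} {a b : V}
    (hab : (K.contractBy f).Adj a b) :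
    ContractStep (K.contractBy f) (K.contractBy fun z => if f z = b then a else f z) := by
  obtain ⟨hne, a', b', ha'b', rfl, rfl⟩ := hab
  refine ⟨f a', f b', ⟨hne, a', b', ha'b', rfl, rfl⟩, ?_, fun u v => ?_⟩
  · ext w
    simp only [contractBy, Set.mem_image, Set.mem_sdiff, Set.mem_singleton_iff]
    grind [ha'b'.fst_mem]
  · simp only [contractBy]
    grind

end Subgraph

end Contraction

section ModelToMinor

variable {G : SimpleGraph V} {H : SimpleGraph W} {B : W → Set V}

def modelSubgraph (G : SimpleGraph V) (H : SimpleGraph W) (B : W → Set V) :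
    (⊤ : SimpleGraph V).Subgraph where
  verts := ⋃ i, B i
  Adj u v := G.Adj u v ∧ ∃ i j, u ∈ B i ∧ v ∈ B j ∧ (i = j ∨ H.Adj i j)
  adj_sub h := h.1.ne
  edge_vert := by
    rintro _ _ ⟨-, i, -, hu, -⟩
    exact Set.mem_iUnion.mpr ⟨i, hu⟩
  symm := ⟨fun _ _ ⟨huv, i, j, hu, hv, hij⟩ =>
    ⟨huv.symm, j, i, hv, hu, hij.imp Eq.symm fun h => h.symm⟩⟩

namespace IsMinorModel

noncomputable def rep (hB : G.IsMinorModel H B) (i : W) : V := (hB.nonempty i).some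

open Classical in
noncomputable def collapse (hB : G.IsMinorModel H B) (z : V) : V :=
  if h : ∃ i, z ∈ B i then hB.rep h.choose else z

variable (hB : G.IsMinorModel H B)

lemma rep_mem (i : W) : hB.rep i ∈ B i := (hB.nonempty i).some_mem

lemma rep_injective : Function.Injective hB.rep :=
  fun i j h => hB.eq_of_mem (hB.rep_mem i) (h ▸ hB.rep_mem j)

lemma collapse_of_mem {z : V} {i : W} (hz : z ∈ B i) : hB.collapse z = hB.rep i := by
  have h : ∃ i, z ∈ B i := ⟨i, hz⟩
  rw [collapse, dif_pos h, hB.eq_of_mem h.choose_spec hz]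

lemma collapse_of_forall_notMem {z : V} (hz : ∀ i, z ∉ B i) : hB.collapse z = z := by
  rw [collapse, dif_neg (not_exists.mpr hz)]

lemma collapse_collapse (z : V) : hB.collapse (hB.collapse z) = hB.collapse z := by
  by_cases hz : ∃ i, z ∈ B i
  · obtain ⟨i, hi⟩ := hz
    rw [hB.collapse_of_mem hi, hB.collapse_of_mem (hB.rep_mem i)]
  · simp only [hB.collapse_of_forall_notMem (not_exists.mp hz)]

lemma exists_adj_contractBy {f : V → V} (hf : ∀ z, f z = z ∨ f z = hB.collapse z) {c : V}
    (hc : f c ≠ hB.collapse c) :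
    ∃ b, f b = b ∧ b ≠ hB.collapse b ∧
      ((modelSubgraph G H B).contractBy f).Adj (hB.collapse b) b := by
  obtain ⟨i, hci⟩ : ∃ i, c ∈ B i := by
    by_contra h
    exact hc (((hf c).resolve_right hc).trans (hB.collapse_of_forall_notMem (not_exists.mp h)).symm)
  have hrep : f (hB.rep i) = hB.collapse (hB.rep i) := by
    rcases hf (hB.rep i) with h | h
    · rw [h, hB.collapse_of_mem (hB.rep_mem i)]
    · exact h
  obtain ⟨w, hw, b, hb, hwB, hbB, hwb⟩ :=
    (hB.connectedOn i _ (hB.rep_mem i) c hci).exists_boundary_adj (C := {z | f z = hB.collapse z})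
      hrep hc
  have hfb : f b = b := (hf b).resolve_right hb
  have hcb : hB.collapse b = hB.rep i := hB.collapse_of_mem hbB
  refine ⟨b, hfb, fun h => hb (hfb.trans h), fun h => hb (hfb.trans h.symm), w, b,
    ⟨hwb, i, i, hwB, hbB, Or.inl rfl⟩, ?_, hfb⟩
  rw [hw, hB.collapse_of_mem hwB, hcb]

lemma reflTransGen_contractStep [Finite V] {f : V → V}
    (hf : ∀ z, f z = z ∨ f z = hB.collapse z) :
    Relation.ReflTransGen ContractStep ((modelSubgraph G H B).contractBy f)
      ((modelSubgraph G H B).contractBy hB.collapse) := by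
  classical
  by_cases hfc : ∀ z, f z = hB.collapse z
  · rw [funext hfc]
  obtain ⟨c, hc⟩ := not_forall.mp hfc
  obtain ⟨b, hfb, hb, hadj⟩ := hB.exists_adj_contractBy hf hc
  have hb_of : ∀ z, f z = b → z = b := fun z hz => by
    rcases hf z with h | h
    · exact h.symm.trans hz
    · exact absurd (by rw [← hz, h, hB.collapse_collapse]) hb
  let f' z := if f z = b then hB.collapse b else f z
  have hf' : ∀ z, f' z = z ∨ f' z = hB.collapse z := fun z => by
    by_cases hz : f z = b
    · obtain rfl := hb_of z hz
      simp [f', hfb]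
    · simpa [f', hz] using hf z
  have hlt : {z | f' z ≠ hB.collapse z}.ncard < {z | f z ≠ hB.collapse z}.ncard := by
    refine Set.ncard_lt_ncard ⟨fun z hz => ?_, fun h => ?_⟩
    · by_cases hzb : f z = b
      · obtain rfl := hb_of z hzb
        simp [f', hfb] at hz
      · simpa [f', hzb] using hz
    · simpa [f', hfb] using h (show f b ≠ hB.collapse b by rwa [hfb])
  exact .head (Subgraph.contractStep_contractBy hadj) (reflTransGen_contractStep hf')
termination_by {z | f z ≠ hB.collapse z}.ncard

lemma contractBy_collapse_adj {i j : W} :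
    ((modelSubgraph G H B).contractBy hB.collapse).Adj (hB.rep i) (hB.rep j) ↔ H.Adj i j := by
  constructor
  · rintro ⟨hne, a, b, ⟨-, i', j', ha, hb, hij⟩, hai, hbj⟩
    rw [hB.collapse_of_mem ha] at hai
    rw [hB.collapse_of_mem hb] at hbj
    obtain rfl := hB.rep_injective hai
    obtain rfl := hB.rep_injective hbj
    exact hij.resolve_left fun h => hne (h ▸ rfl)
  · intro hij
    obtain ⟨a, ha, b, hb, hab⟩ := hB.exists_adj hij
    exact ⟨hB.rep_injective.ne hij.ne, a, b, ⟨hab, i, j, ha, hb, Or.inr hij⟩,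
      hB.collapse_of_mem ha, hB.collapse_of_mem hb⟩

lemma mem_contractBy_collapse_verts {v : V} :
    v ∈ ((modelSubgraph G H B).contractBy hB.collapse).verts ↔ v ∈ Set.range hB.rep := by
  constructor
  · rintro ⟨a, ha, rfl⟩
    obtain ⟨i, hi⟩ := Set.mem_iUnion.mp ha
    exact ⟨i, (hB.collapse_of_mem hi).symm⟩
  · rintro ⟨i, rfl⟩
    exact ⟨hB.rep i, Set.mem_iUnion.mpr ⟨i, hB.rep_mem i⟩, hB.collapse_of_mem (hB.rep_mem i)⟩

end IsMinorModel

lemma IsMinorModel.hasMinor [Finite V] (hB : G.IsMinorModel H B) : HasMinor G H := by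
  refine ⟨modelSubgraph G H B, (modelSubgraph G H B).contractBy hB.collapse, fun _ _ h => h.1,
    ?_, ⟨?_⟩⟩
  · simpa [Subgraph.contractBy_id] using
      hB.reflTransGen_contractStep (f := id) fun _ => Or.inl rfl
  · refine ⟨Equiv.ofBijective (fun i => ⟨hB.rep i, hB.mem_contractBy_collapse_verts.mpr ⟨i, rfl⟩⟩)
      ⟨fun i j h => hB.rep_injective (congrArg Subtype.val h), fun ⟨v, hv⟩ => ?_⟩,
      hB.contractBy_collapse_adj⟩
    obtain ⟨i, rfl⟩ := hB.mem_contractBy_collapse_verts.mp hv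
    exact ⟨i, rfl⟩

end ModelToMinor

end SimpleGraph

lemma Set.OrdConnected.of_connectedOn_hasse {S : Set ℕ} (h : (SimpleGraph.hasse ℕ).ConnectedOn S) :
    S.OrdConnected := by
  refine Set.ordConnected_iff_uIcc_subset.mpr fun a ha b hb => ?_
  induction h a ha b hb with
  | refl => simpa using ha
  | @tail c d _ hcd ih =>
    intro t ht
    have hcd' := hcd.2.2
    simp only [SimpleGraph.hasse_adj, Nat.covBy_iff_add_one_eq] at hcd'
    by_cases htd : t = d
    · exact htd ▸ hcd.2.1
    · exact ih hcd.1 (by simp only [Set.mem_uIcc] at ht ⊢; omega)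

/-- An order-connected set of naturals has at most two outer neighbours. -/
lemma Set.OrdConnected.not_injective_of_hasse_adj {ι : Type*} [Fintype ι]
    (hι : 2 < Fintype.card ι) {S : Set ℕ} (hS : S.OrdConnected) {s t : ι → ℕ}
    (hs : ∀ k, s k ∈ S) (ht : ∀ k, t k ∉ S) (hst : ∀ k, (SimpleGraph.hasse ℕ).Adj (s k) (t k)) :
    ¬ Function.Injective t := by
  have hst' : ∀ k, t k = s k + 1 ∨ t k + 1 = s k := fun k => by
    simpa [SimpleGraph.hasse_adj, eq_comm] using hst k
  classical
  obtain ⟨k, l, hkl, hside⟩ := Fintype.exists_ne_map_eq_of_card_lt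
    (fun k => decide (t k = s k + 1)) (by simpa using hι)
  refine fun ht_inj => hkl (ht_inj ?_)
  have between : ∀ {a b c}, a ∈ S → b ∈ S → c ∉ S → c < a ∨ b < c := fun ha hb hc => by
    by_contra h
    exact hc (hS.out ha hb ⟨by omega, by omega⟩)
  have := between (hs k) (hs l) (ht k)
  have := between (hs l) (hs k) (ht k)
  have := between (hs k) (hs l) (ht l)
  have := between (hs l) (hs k) (ht l)
  have := hst' k
  have := hst' l
  simp only [decide_eq_decide] at hside
  omega

namespace ExtGraph

open SimpleGraph

variable {G : SimpleGraph V} {D : Set V} {x y : V} {n : ℕ}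

lemma sup_edge_adj_of_adj_inl_inl {u v : D} (h : (ExtGraph G D x y n).Adj (.inl u) (.inl v)) :
    (G ⊔ edge x y).Adj u v := by
  simp only [ExtGraph, fromRel_adj, ne_eq, Sum.inl.injEq] at h
  have huv : (u : V) ≠ v := Subtype.coe_injective.ne h.1
  rcases h.2 with (h | ⟨-, hu, hv⟩) | (h | ⟨-, hv, hu⟩)
  · exact Or.inl h
  · exact Or.inr ((edge_adj ..).mpr ⟨Or.inl ⟨hu, hv⟩, huv⟩)
  · exact Or.inl h.symm
  · exact Or.inr ((edge_adj ..).mpr ⟨Or.inr ⟨hu, hv⟩, huv⟩)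

lemma eq_of_adj_inl_inr {u : D} {p : Fin n} (h : (ExtGraph G D x y n).Adj (.inl u) (.inr p)) :
    ((u : V) = x ∧ (p : ℕ) = 0) ∨ ((u : V) = y ∧ (p : ℕ) = n - 1) := by
  simpa [ExtGraph] using h

lemma eq_of_adj_inr_inr {p q : Fin n} (h : (ExtGraph G D x y n).Adj (.inr p) (.inr q)) :
    (q : ℕ) = p + 1 ∨ (p : ℕ) = q + 1 := by
  simpa [ExtGraph] using h.2

variable (D x y n) in
def pathVerts : Set (D ⊕ Fin n) :=
  {t | Sum.elim (fun w : D => (w : V) = x ∨ (w : V) = y) (fun _ => True) t}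

open Classical in
variable (D x n) in
/-- Position along the path `x, inr 0, …, inr (n - 1), y`. -/
noncomputable def pathIndex : D ⊕ Fin n → ℕ :=
  Sum.elim (fun w => if (w : V) = x then 0 else n + 1) fun p => p + 1

lemma pathIndex_injOn : Set.InjOn (pathIndex D x n) (pathVerts D x y n) := by
  rintro (u | p) hu (v | q) hv h <;>
    simp only [pathVerts, pathIndex, Set.mem_ofPred_eq, Sum.elim_inl, Sum.elim_inr] at hu hv h
  · exact congrArg Sum.inl (Subtype.ext (by split_ifs at h <;> grind))
  · split_ifs at h
    omega
  · split_ifs at h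
    omega
  · exact congrArg Sum.inr (Fin.ext (by omega))

lemma mem_pathVerts_of_adj_inr (hxy : x ≠ y) {p : Fin n} {t : D ⊕ Fin n}
    (h : (ExtGraph G D x y n).Adj (.inr p) t) :
    t ∈ pathVerts D x y n ∧ (hasse ℕ).Adj (pathIndex D x n (.inr p)) (pathIndex D x n t) := by
  have hp := p.isLt
  cases t with
  | inl w =>
    rcases eq_of_adj_inl_inr h.symm with ⟨hw, hp0⟩ | ⟨hw, hpn⟩
    · simp [pathVerts, pathIndex, hw, hp0, hasse_adj]
    · simp [pathVerts, pathIndex, hw, hxy.symm, hasse_adj]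
      omega
  | inr q =>
    have := eq_of_adj_inr_inr h
    simp only [pathVerts, pathIndex, Set.mem_ofPred_eq, Sum.elim_inr, hasse_adj,
      Nat.covBy_iff_add_one_eq, true_and]
    omega

lemma not_injective_of_subset_range_inr (hxy : x ≠ y) {B : Set (D ⊕ Fin n)}
    (hB : (ExtGraph G D x y n).ConnectedOn B) (hBP : B ⊆ Set.range Sum.inr)
    {ι : Type*} [Fintype ι] (hι : 2 < Fintype.card ι) {s t : ι → D ⊕ Fin n}
    (hs : ∀ k, s k ∈ B) (ht : ∀ k, t k ∉ B) (hst : ∀ k, (ExtGraph G D x y n).Adj (s k) (t k)) :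
    ¬ Function.Injective t := by
  have adj_of_mem : ∀ {a} b, a ∈ B → (ExtGraph G D x y n).Adj a b →
      b ∈ pathVerts D x y n ∧ (hasse ℕ).Adj (pathIndex D x n a) (pathIndex D x n b) := by
    intro a b ha hab
    obtain ⟨p, rfl⟩ := hBP ha
    exact mem_pathVerts_of_adj_inr hxy hab
  have mem_of_mem : ∀ {a}, a ∈ B → a ∈ pathVerts D x y n := fun ha => by
    obtain ⟨p, rfl⟩ := hBP ha
    trivial
  have hS : (pathIndex D x n '' B).OrdConnected := .of_connectedOn_hasse <|
    hB.image _ fun a ha b _ hab => Or.inr (adj_of_mem b ha hab).2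
  refine fun ht_inj => hS.not_injective_of_hasse_adj hι (s := pathIndex D x n ∘ s)
    (fun k => ⟨_, hs k, rfl⟩) (fun k ⟨b, hb, hbt⟩ => ?_) (fun k => (adj_of_mem _ (hs k) (hst k)).2)
    fun k l hkl => ht_inj (pathIndex_injOn (adj_of_mem _ (hs k) (hst k)).1
      (adj_of_mem _ (hs l) (hst l)).1 hkl)
  exact ht k (pathIndex_injOn (mem_of_mem hb) (adj_of_mem _ (hs k) (hst k)).1 hbt ▸ hb)

variable {W : Type*} {H : SimpleGraph W} {B : W → Set (D ⊕ Fin n)}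

lemma not_subset_range_inr [H.LocallyFinite] (hxy : x ≠ y) (hdeg : ∀ i, 3 ≤ H.degree i)
    (hB : (ExtGraph G D x y n).IsMinorModel H B) (i : W) : ¬ B i ⊆ Set.range Sum.inr := by
  intro hi
  choose s hs t ht hst using fun j : H.neighborSet i => hB.exists_adj j.2
  refine not_injective_of_subset_range_inr hxy (hB.connectedOn i) hi
    (by rw [card_neighborSet_eq_degree]; exact hdeg i) hs (fun j hj => ?_) hst
    fun j k hjk => Subtype.ext (hB.eq_of_mem (ht j) (hjk ▸ ht k))
  exact (show H.Adj i j from j.2).ne (hB.eq_of_mem hj (ht j))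

lemma mem_image_inl_of_inr_mem [H.LocallyFinite] (hxy : x ≠ y) (hdeg : ∀ i, 3 ≤ H.degree i)
    (hB : (ExtGraph G D x y n).IsMinorModel H B) {i : W} {p : Fin n} (hp : .inr p ∈ B i) :
    x ∈ Subtype.val '' (Sum.inl ⁻¹' B i) ∨ y ∈ Subtype.val '' (Sum.inl ⁻¹' B i) := by
  obtain ⟨a, ha, haP⟩ := Set.not_subset.mp (not_subset_range_inr hxy hdeg hB i)
  obtain ⟨_, ⟨q, rfl⟩, w, hw, -, hwB, hqw⟩ :=
    (hB.connectedOn i _ hp a ha).exists_boundary_adj (C := Set.range Sum.inr) ⟨p, rfl⟩ haP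
  cases w with
  | inl u =>
    rcases eq_of_adj_inl_inr hqw.symm with ⟨hu, -⟩ | ⟨hu, -⟩
    · exact Or.inl ⟨u, hwB, hu⟩
    · exact Or.inr ⟨u, hwB, hu⟩
  | inr q' => exact absurd ⟨q', rfl⟩ hw

variable (D n) in
def collapsePath (c : V) : D ⊕ Fin n → V := Sum.elim Subtype.val fun _ => c

lemma sup_edge_adj_of_mem {u v : V} (hu : u = x ∨ u = y) (hv : v = x ∨ v = y) (huv : u ≠ v) :
    (G ⊔ edge x y).Adj u v :=
  Or.inr ((edge_adj ..).mpr ⟨by grind, huv⟩)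

lemma sup_edge_adj_collapsePath {a b : D ⊕ Fin n} (hab : (ExtGraph G D x y n).Adj a b) {c d : V}
    (hc : c = x ∨ c = y) (hd : d = x ∨ d = y) (hne : collapsePath D n c a ≠ collapsePath D n d b) :
    (G ⊔ edge x y).Adj (collapsePath D n c a) (collapsePath D n d b) := by
  cases a with
  | inl u =>
    cases b with
    | inl v => exact sup_edge_adj_of_adj_inl_inl hab
    | inr q =>
      refine sup_edge_adj_of_mem ?_ hd hne
      rcases eq_of_adj_inl_inr hab with ⟨hu, -⟩ | ⟨hu, -⟩
      exacts [Or.inl hu, Or.inr hu]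
  | inr p =>
    cases b with
    | inl v =>
      refine sup_edge_adj_of_mem hc ?_ hne
      rcases eq_of_adj_inl_inr hab.symm with ⟨hv, -⟩ | ⟨hv, -⟩
      exacts [Or.inl hv, Or.inr hv]
    | inr q => exact sup_edge_adj_of_mem hc hd hne

theorem exists_isMinorModel_sup_edge [H.LocallyFinite] (hxy : x ≠ y)
    (hdeg : ∀ i, 3 ≤ H.degree i) (hB : (ExtGraph G D x y n).IsMinorModel H B) :
    ∃ B' : W → Set V, (G ⊔ edge x y).IsMinorModel H B' := by
  classical
  let P i := Subtype.val '' (Sum.inl ⁻¹' B i)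
  let c i := if x ∈ P i then x else y
  have hc : ∀ i, c i = x ∨ c i = y := fun i => by by_cases h : x ∈ P i <;> simp [c, h]
  have hsub : ∀ i, collapsePath D n (c i) '' B i ⊆ P i := by
    rintro i _ ⟨a | p, ha, rfl⟩
    · exact ⟨a, ha, rfl⟩
    · change c i ∈ P i
      by_cases h : x ∈ P i
      · rwa [show c i = x from if_pos h]
      · rw [show c i = y from if_neg h]
        exact (mem_image_inl_of_inr_mem hxy hdeg hB ha).resolve_left h
  have hdisj : Pairwise fun i j => Disjoint (collapsePath D n (c i) '' B i)
      (collapsePath D n (c j) '' B j) := fun i j hij =>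
    (Set.disjoint_image_of_injective Subtype.val_injective ((hB.disjoint hij).preimage _)).mono
      (hsub i) (hsub j)
  refine ⟨fun i => collapsePath D n (c i) '' B i, ⟨fun i => (hB.nonempty i).image _,
    fun i => (hB.connectedOn i).image _ fun a _ b _ hab => ?_, hdisj, fun i j hij => ?_⟩⟩
  · by_cases h : collapsePath D n (c i) a = collapsePath D n (c i) b
    · exact Or.inl h
    · exact Or.inr (sup_edge_adj_collapsePath hab (hc i) (hc i) h)
  · obtain ⟨a, ha, b, hb, hab⟩ := hB.exists_adj hij
    have hne : collapsePath D n (c i) a ≠ collapsePath D n (c j) b := fun h =>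
      Set.disjoint_left.mp (hdisj hij.ne) ⟨a, ha, rfl⟩ ⟨b, hb, h.symm⟩
    exact ⟨_, ⟨a, ha, rfl⟩, _, ⟨b, hb, rfl⟩, sup_edge_adj_collapsePath hab (hc i) (hc j) hne⟩

end ExtGraph

namespace SimpleGraph

variable {W : Type*}

section FullComponent

structure IsFullComponent (G : SimpleGraph V) (S C : Set V) : Prop where
  disjoint : Disjoint C S
  connectedOn : G.ConnectedOn C
  mem_or_mem_of_adj : ∀ ⦃a b⦄, a ∈ C → G.Adj a b → b ∈ C ∨ b ∈ S
  exists_adj : ∀ s ∈ S, ∃ c ∈ C, G.Adj s c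

def componentOff (G : SimpleGraph V) (S : Set V) (u : V) : Set V :=
  {w | w ∉ S ∧ G.ReachOn Sᶜ u w}

variable {G : SimpleGraph V} {S : Set V} {u v : V}

lemma mem_componentOff_of_adj {a b : V} (ha : a ∈ G.componentOff S u) (hab : G.Adj a b)
    (hb : b ∉ S) : b ∈ G.componentOff S u :=
  ⟨hb, ha.2.trans (.single ha.1 hb hab)⟩

lemma connectedOn_componentOff : G.ConnectedOn (G.componentOff S u) := by
  refine connectedOn_of_reachOn (z := u) fun w hw => ReachOn.symm ?_
  induction hw.2 with
  | refl => rfl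
  | @tail c d hc hcd ih =>
    exact (ih ⟨hcd.1, hc⟩).trans (.single ⟨hcd.1, hc⟩ ⟨hcd.2.1, hc.tail hcd⟩ hcd.2.2)

lemma exists_adj_componentOff (hmin : ∀ S' ⊂ S, ¬ Separates G S') (hu : u ∉ S) (hv : v ∉ S)
    (huv : G.Reachable u v) (hnr : ¬ G.ReachOn Sᶜ u v) {s : V} (hs : s ∈ S) :
    ∃ c ∈ G.componentOff S u, G.Adj s c := by
  by_contra! hno
  refine hmin (S \ {s}) (Set.sdiff_singleton_ssubset.mpr hs)
    ⟨u, v, fun h => hu h.1, fun h => hv h.1, huv, fun h => hnr ?_⟩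
  have hvC := (reachIn_iff_reachOn.mp h).2.2.mem_of_closed (C := G.componentOff S u) ⟨hu, .refl⟩
    fun w hw w' hw' hww' => mem_componentOff_of_adj hw hww' fun hw'S =>
      hw' ⟨hw'S, fun hws => hno w hw (hws ▸ hww'.symm)⟩
  exact hvC.2

lemma isFullComponent_componentOff (hmin : ∀ S' ⊂ S, ¬ Separates G S') (hu : u ∉ S)
    (hv : v ∉ S) (huv : G.Reachable u v) (hnr : ¬ G.ReachOn Sᶜ u v) :
    G.IsFullComponent S (G.componentOff S u) where
  disjoint := Set.disjoint_left.mpr fun _ hw => hw.1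
  connectedOn := connectedOn_componentOff
  mem_or_mem_of_adj a b ha hab := by
    by_cases hb : b ∈ S
    · exact Or.inr hb
    · exact Or.inl (mem_componentOff_of_adj ha hab hb)
  exists_adj _ hs := exists_adj_componentOff hmin hu hv huv hnr hs

lemma IsMinimalSeparator.exists_isFullComponent (hS : IsMinimalSeparator G S) :
    ∃ C₁ C₂, G.IsFullComponent S C₁ ∧ G.IsFullComponent S C₂ ∧ Disjoint C₁ C₂ := by
  obtain ⟨⟨u, v, hu, hv, huv, hnr⟩, hmin⟩ := hS
  have hnr' : ¬ G.ReachOn Sᶜ u v := fun h => hnr (reachIn_iff_reachOn.mpr ⟨hu, hv, h⟩)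
  refine ⟨_, _, isFullComponent_componentOff hmin hu hv huv hnr',
    isFullComponent_componentOff hmin hv hu huv.symm fun h => hnr' h.symm,
    Set.disjoint_left.mpr fun w hwu hwv => hnr' (hwu.2.trans hwv.2.symm)⟩

end FullComponent

section Dichotomy

variable {G : SimpleGraph V} {H : SimpleGraph W} {x y a b : V} {B : W → Set V}
  {C : Set V} {i₁ i₂ : W}

lemma IsFullComponent.mem_or_mem_of_sup_edge_adj (hC : G.IsFullComponent {x, y} C) (ha : a ∈ C)
    (hab : (G ⊔ edge x y).Adj a b) : b ∈ C ∨ b ∈ ({x, y} : Set V) := by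
  have hanot : a ∉ ({x, y} : Set V) := Set.disjoint_left.mp hC.disjoint ha
  exact hC.mem_or_mem_of_adj ha (adj_of_sup_edge_adj_of_notMem hab.symm hanot).symm

namespace IsMinorModel

lemma notMem_pair_of_mem (hB : G.IsMinorModel H B) (hx : x ∈ B i₁) (hy : y ∈ B i₂) {i : W}
    (hi : i ∉ ({i₁, i₂} : Set W)) {c : V} (hc : c ∈ B i) : c ∉ ({x, y} : Set V) := by
  rintro (rfl | rfl)
  exacts [hi (Or.inl (hB.eq_of_mem hc hx)), hi (Or.inr (hB.eq_of_mem hc hy))]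

lemma disjoint_isFullComponent (hB : (G ⊔ edge x y).IsMinorModel H B)
    (hC : G.IsFullComponent {x, y} C) (hx : x ∈ B i₁) (hy : y ∈ B i₂) {i : W}
    (hi : i ∉ ({i₁, i₂} : Set W)) (hiC : ¬ B i ⊆ C) : Disjoint (B i) C := by
  refine Set.disjoint_iff_inter_eq_empty.mpr (Set.not_nonempty_iff_eq_empty.mp fun hne => ?_)
  obtain ⟨c, hcB, hcS⟩ := (hB.connectedOn i).inter_nonempty_of_closed
    (fun _ _ ha hab => hC.mem_or_mem_of_sup_edge_adj ha hab) hne hiC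
  exact hB.notMem_pair_of_mem hx hy hi hcB hcS

lemma subset_isFullComponent (hB : (G ⊔ edge x y).IsMinorModel H B)
    (hC : G.IsFullComponent {x, y} C) (hx : x ∈ B i₁) (hy : y ∈ B i₂)
    (hH : (H.induce {i₁, i₂}ᶜ).Preconnected) {i : W} (hi : B i ⊆ C) {j : W}
    (hj : j ∉ ({i₁, i₂} : Set W)) : B j ⊆ C := by
  have hiS : i ∉ ({i₁, i₂} : Set W) := by
    rintro (rfl | rfl)
    exacts [Set.disjoint_left.mp hC.disjoint (hi hx) (Or.inl rfl),
      Set.disjoint_left.mp hC.disjoint (hi hy) (Or.inr rfl)]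
  refine Preconnected.subset_of_closed (I := {k | B k ⊆ C}) hH hiS hi
    (fun k _ hkC l hl hkl => ?_) hj
  by_contra hlC
  obtain ⟨a, ha, b, hb, hab⟩ := hB.exists_adj hkl
  have hbC := (hC.mem_or_mem_of_sup_edge_adj (hkC ha) hab).resolve_right
    (hB.notMem_pair_of_mem hx hy hl hb)
  exact Set.disjoint_left.mp (hB.disjoint_isFullComponent hC hx hy hl hlC) hb hbC

lemma forall_not_subset_or_forall_not_subset (hB : (G ⊔ edge x y).IsMinorModel H B)
    {C₁ C₂ : Set V} (hC₁ : G.IsFullComponent {x, y} C₁) (hC₂ : G.IsFullComponent {x, y} C₂)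
    (hC₁₂ : Disjoint C₁ C₂) (hx : x ∈ B i₁) (hy : y ∈ B i₂)
    (hH : (H.induce {i₁, i₂}ᶜ).Connected) : (∀ i, ¬ B i ⊆ C₁) ∨ (∀ i, ¬ B i ⊆ C₂) := by
  by_contra! h
  obtain ⟨⟨i, hi⟩, ⟨j, hj⟩⟩ := h
  obtain ⟨⟨k, hk⟩⟩ := hH.nonempty
  obtain ⟨a, ha⟩ := hB.nonempty k
  exact Set.disjoint_left.mp hC₁₂ (hB.subset_isFullComponent hC₁ hx hy hH.preconnected hi hk ha)
    (hB.subset_isFullComponent hC₂ hx hy hH.preconnected hj hk ha)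

end IsMinorModel

end Dichotomy

section Reroute

variable {G : SimpleGraph V} {H : SimpleGraph W} {x y : V} {B : W → Set V}
  {C : Set V} {i₁ i₂ : W}

open Classical in
def reroute (B : W → Set V) (C : Set V) (i₁ : W) (i : W) : Set V :=
  if i = i₁ then B i₁ ∪ C else B i \ C

lemma reroute_self : reroute B C i₁ i₁ = B i₁ ∪ C := if_pos rfl

lemma reroute_of_ne {i : W} (hi : i ≠ i₁) : reroute B C i₁ i = B i \ C := if_neg hi

lemma sdiff_subset_reroute (i : W) : B i \ C ⊆ reroute B C i₁ i := by
  by_cases hi : i = i₁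
  · subst hi
    exact reroute_self (B := B) ▸ Set.sdiff_subset.trans Set.subset_union_left
  · rw [reroute_of_ne hi]

namespace IsMinorModel

lemma connectedOn_reroute_self (hB : (G ⊔ edge x y).IsMinorModel H B)
    (hC : G.IsFullComponent {x, y} C) (hx : x ∈ B i₁) :
    G.ConnectedOn (reroute B C i₁ i₁) := by
  obtain ⟨cx, hcx, hxcx⟩ := hC.exists_adj x (Or.inl rfl)
  obtain ⟨cy, hcy, hycy⟩ := hC.exists_adj y (Or.inr rfl)
  have hxy : y ∈ B i₁ → G.ReachOn (B i₁ ∪ C) x y := fun hy =>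
    ((ReachOn.single (B := B i₁ ∪ C) (Or.inl hx) (Or.inr hcx) hxcx).trans
      ((hC.connectedOn cx hcx cy hcy).mono Set.subset_union_right)).trans
      (.single (Or.inr hcy) (Or.inl hy) hycy.symm)
  rw [reroute_self]
  refine connectedOn_of_reachOn (z := x) ?_
  rintro a (ha | ha)
  · exact (hB.connectedOn i₁ a ha x hx).of_sup_edge Set.subset_union_left fun _ => hxy
  · exact ((hC.connectedOn a ha cx hcx).mono Set.subset_union_right).trans
      (.single (Or.inr hcx) (Or.inl hx) hxcx.symm)

lemma connectedOn_reroute_of_ne (hB : (G ⊔ edge x y).IsMinorModel H B)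
    (hC : G.IsFullComponent {x, y} C) (hfree : ∀ i, ¬ B i ⊆ C) (hx : x ∈ B i₁) (hy : y ∈ B i₂)
    {i : W} (hi : i ≠ i₁) : G.ConnectedOn (reroute B C i₁ i) := by
  have hxi : ∀ a ∈ B i, a ≠ x := fun a ha hax => hi (hB.eq_of_mem ha (hax ▸ hx))
  have hG : G.ConnectedOn (B i) := fun a ha b hb => (hB.connectedOn i a ha b hb).mono_graph
    fun c hc d hd hcd => adj_of_sup_edge_adj_of_ne hcd (hxi c hc) (hxi d hd)
  rw [reroute_of_ne hi]
  by_cases hi₂ : i = i₂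
  · subst hi₂
    refine hG.sdiff_of_adj_eq hy fun a ha b hb hbC hab => ?_
    rcases (hC.mem_or_mem_of_adj ha hab).resolve_left hbC with hbx | hby
    exacts [absurd hbx (hxi b hb), hby]
  · rwa [(hB.disjoint_isFullComponent hC hx hy (by rintro (h | h) <;> contradiction)
      (hfree i)).sdiff_eq_left]

lemma exists_adj_reroute_of_notMem (hB : (G ⊔ edge x y).IsMinorModel H B)
    (hC : G.IsFullComponent {x, y} C) (hfree : ∀ i, ¬ B i ⊆ C) (hx : x ∈ B i₁) (hy : y ∈ B i₂)
    {i j : W} (hij : H.Adj i j) (hj : j ∉ ({i₁, i₂} : Set W)) :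
    ∃ a ∈ reroute B C i₁ i, ∃ b ∈ reroute B C i₁ j, G.Adj a b := by
  obtain ⟨a, ha, b, hb, hab⟩ := hB.exists_adj hij
  have hbxy := hB.notMem_pair_of_mem hx hy hj hb
  have hbC : b ∉ C :=
    Set.disjoint_left.mp (hB.disjoint_isFullComponent hC hx hy hj (hfree j)) hb
  have hGab := adj_of_sup_edge_adj_of_notMem hab hbxy
  have haC : a ∉ C := fun haC => (hC.mem_or_mem_of_adj haC hGab).elim hbC hbxy
  exact ⟨a, sdiff_subset_reroute i ⟨ha, haC⟩, b, sdiff_subset_reroute j ⟨hb, hbC⟩, hGab⟩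

lemma exists_adj_reroute (hB : (G ⊔ edge x y).IsMinorModel H B)
    (hC : G.IsFullComponent {x, y} C) (hfree : ∀ i, ¬ B i ⊆ C) (hx : x ∈ B i₁) (hy : y ∈ B i₂)
    {i j : W} (hij : H.Adj i j) : ∃ a ∈ reroute B C i₁ i, ∃ b ∈ reroute B C i₁ j, G.Adj a b := by
  by_cases hj : j ∈ ({i₁, i₂} : Set W)
  · by_cases hi : i ∈ ({i₁, i₂} : Set W)
    · obtain ⟨cy, hcy, hycy⟩ := hC.exists_adj y (Or.inr rfl)
      have hcy' : cy ∈ reroute B C i₁ i₁ := reroute_self (B := B) ▸ Or.inr hcy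
      have hy' : i₂ ≠ i₁ → y ∈ reroute B C i₁ i₂ := fun h => by
        rw [reroute_of_ne h]
        exact ⟨hy, fun h => Set.disjoint_left.mp hC.disjoint h (Or.inr rfl)⟩
      rcases hi with rfl | rfl <;> rcases hj with rfl | rfl
      · exact absurd rfl hij.ne
      · exact ⟨cy, hcy', y, hy' hij.ne.symm, hycy.symm⟩
      · exact ⟨y, hy' hij.ne, cy, hcy', hycy⟩
      · exact absurd rfl hij.ne
    · obtain ⟨b, hb, a, ha, hba⟩ := exists_adj_reroute_of_notMem hB hC hfree hx hy hij.symm hi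
      exact ⟨a, ha, b, hb, hba.symm⟩
  · exact exists_adj_reroute_of_notMem hB hC hfree hx hy hij hj

end IsMinorModel

lemma pairwise_disjoint_reroute (hB : Pairwise fun i j => Disjoint (B i) (B j)) :
    Pairwise fun i j => Disjoint (reroute B C i₁ i) (reroute B C i₁ j) := by
  have key : ∀ {i j}, i ≠ j → j ≠ i₁ → Disjoint (reroute B C i₁ i) (reroute B C i₁ j) := by
    intro i j hij hj
    rw [reroute_of_ne hj]
    by_cases hi : i = i₁
    · subst hi
      rw [reroute_self]
      exact Set.disjoint_union_left.mpr ⟨(hB hij).mono_right Set.sdiff_subset,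
        Set.disjoint_sdiff_right⟩
    · rw [reroute_of_ne hi]
      exact (hB hij).mono Set.sdiff_subset Set.sdiff_subset
  intro i j hij
  by_cases hj : j = i₁
  · exact (key hij.symm (hj ▸ hij)).symm
  · exact key hij hj

theorem IsMinorModel.exists_of_isFullComponent (hB : (G ⊔ edge x y).IsMinorModel H B)
    (hC : G.IsFullComponent {x, y} C) (hfree : ∀ i, ¬ B i ⊆ C) (hx : x ∈ B i₁)
    (hy : y ∈ B i₂) : ∃ B' : W → Set V, G.IsMinorModel H B' := by
  refine ⟨reroute B C i₁, fun i => (Set.sdiff_nonempty.mpr (hfree i)).mono (sdiff_subset_reroute i),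
    fun i => ?_, pairwise_disjoint_reroute hB.disjoint,
    fun i j hij => hB.exists_adj_reroute hC hfree hx hy hij⟩
  by_cases hi : i = i₁
  · subst hi
    exact hB.connectedOn_reroute_self hC hx
  · exact hB.connectedOn_reroute_of_ne hC hfree hx hy hi

end Reroute

section Separator

variable {G : SimpleGraph V} {H : SimpleGraph W} {x y : V} {B : W → Set V}

lemma IsMinorModel.of_sup_edge_of_forall_notMem (hB : (G ⊔ edge x y).IsMinorModel H B)
    (hx : ∀ i, x ∉ B i) : G.IsMinorModel H B where
  nonempty := hB.nonempty
  connectedOn i a ha b hb := (hB.connectedOn i a ha b hb).mono_graph fun c hc d hd hcd =>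
    adj_of_sup_edge_adj_of_ne hcd (fun (h : c = x) => hx i (h ▸ hc)) fun h => hx i (h ▸ hd)
  disjoint := hB.disjoint
  exists_adj i j hij := by
    obtain ⟨a, ha, b, hb, hab⟩ := hB.exists_adj hij
    exact ⟨a, ha, b, hb,
      adj_of_sup_edge_adj_of_ne hab (fun h => hx i (h ▸ ha)) fun h => hx j (h ▸ hb)⟩

theorem IsMinimalSeparator.exists_isMinorModel (hsep : IsMinimalSeparator G {x, y})
    (hH : ∀ s t, (H.induce {s, t}ᶜ).Connected) (hB : (G ⊔ edge x y).IsMinorModel H B) :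
    ∃ B' : W → Set V, G.IsMinorModel H B' := by
  by_cases hxB : ∃ i, x ∈ B i
  swap
  · exact ⟨B, hB.of_sup_edge_of_forall_notMem (not_exists.mp hxB)⟩
  by_cases hyB : ∃ i, y ∈ B i
  swap
  · rw [edge_comm] at hB
    exact ⟨B, hB.of_sup_edge_of_forall_notMem (not_exists.mp hyB)⟩
  obtain ⟨i₁, hx⟩ := hxB
  obtain ⟨i₂, hy⟩ := hyB
  obtain ⟨C₁, C₂, hC₁, hC₂, hC₁₂⟩ := hsep.exists_isFullComponent
  rcases hB.forall_not_subset_or_forall_not_subset hC₁ hC₂ hC₁₂ hx hy (hH i₁ i₂) with h | h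
  · exact hB.exists_of_isFullComponent hC₁ h hx hy
  · exact hB.exists_of_isFullComponent hC₂ h hx hy

end Separator

instance (α β : Type*) : DecidableRel (completeBipartiteGraph α β).Adj := fun a b =>
  decidable_of_iff' _ (Eq.to_iff (completeBipartiteGraph_adj α β a b))

lemma three_le_degree_completeGraph_fin_five (i : Fin 5) :
    3 ≤ (completeGraph (Fin 5)).degree i := by
  revert i
  decide

lemma three_le_degree_completeBipartiteGraph_fin_three (i : Fin 3 ⊕ Fin 3) :
    3 ≤ (completeBipartiteGraph (Fin 3) (Fin 3)).degree i := by
  revert i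
  decide

lemma connected_induce_compl_pair_completeGraph_fin_five (s t : Fin 5) :
    ((completeGraph (Fin 5)).induce {s, t}ᶜ).Connected := by
  obtain ⟨k, hk⟩ : ∃ k : Fin 5, k ≠ s ∧ k ≠ t := by revert s t; decide
  have : Nonempty ↥({s, t}ᶜ : Set (Fin 5)) := ⟨k, by simp [hk.1, hk.2]⟩
  rw [induce_top]
  exact connected_top

lemma connected_induce_compl_pair_completeBipartiteGraph_fin_three (s t : Fin 3 ⊕ Fin 3) :
    ((completeBipartiteGraph (Fin 3) (Fin 3)).induce {s, t}ᶜ).Connected := by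
  obtain ⟨a, b, ha, hb⟩ : ∃ a b : Fin 3, (Sum.inl a ≠ s ∧ Sum.inl a ≠ t) ∧
      (Sum.inr b ≠ s ∧ Sum.inr b ≠ t) := by revert s t; decide
  let u : ↥({s, t}ᶜ : Set (Fin 3 ⊕ Fin 3)) := ⟨.inl a, by simp [ha.1, ha.2]⟩
  let v : ↥({s, t}ᶜ : Set (Fin 3 ⊕ Fin 3)) := ⟨.inr b, by simp [hb.1, hb.2]⟩
  have hreach : ∀ k,
      ((completeBipartiteGraph (Fin 3) (Fin 3)).induce {s, t}ᶜ).Reachable k u := by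
    rintro ⟨k | k, hk⟩
    · exact (Adj.reachable (v := v) (by simp [v])).trans (Adj.reachable (by simp [u, v]))
    · exact Adj.reachable (by simp [u])
  have : Nonempty ↥({s, t}ᶜ : Set (Fin 3 ⊕ Fin 3)) := ⟨u⟩
  exact ⟨fun k l => (hreach k).trans (hreach l).symm⟩

theorem HasMinor.of_extGraph [Finite V] {G : SimpleGraph V} {D : Set V} {x y : V} {n : ℕ}
    {H : SimpleGraph W} [H.LocallyFinite] (hxy : x ≠ y)
    (hsep : IsMinimalSeparator G {x, y}) (hdeg : ∀ i, 3 ≤ H.degree i)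
    (hH : ∀ s t, (H.induce {s, t}ᶜ).Connected) (h : HasMinor (ExtGraph G D x y n) H) :
    HasMinor G H := by
  obtain ⟨B, hB⟩ := h.exists_isMinorModel
  obtain ⟨B₁, hB₁⟩ := ExtGraph.exists_isMinorModel_sup_edge hxy hdeg hB
  obtain ⟨B₂, hB₂⟩ := hsep.exists_isMinorModel hH hB₁
  exact hB₂.hasMinor

end SimpleGraph

theorem extension_of_minimalSeparator_planar_general [Fintype V] (G : SimpleGraph V)
    (x y : V) (hxy : x ≠ y) (hG : IsPlanar G) (hsep : IsMinimalSeparator G {x, y})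
    (D : Set V) (n : ℕ) :
    IsPlanar (ExtGraph G D x y n) :=
  ⟨fun h => hG.1 (h.of_extGraph hxy hsep three_le_degree_completeGraph_fin_five
      connected_induce_compl_pair_completeGraph_fin_five),
    fun h => hG.2 (h.of_extGraph hxy hsep three_le_degree_completeBipartiteGraph_fin_three
      connected_induce_compl_pair_completeBipartiteGraph_fin_three)⟩

/-- If `{x, y}` is a minimal separator in a planar graph `G`, then any `xy`-extension
of `G` is planar. -/
theorem extension_of_minimalSeparator_planar [Fintype V] (G : SimpleGraph V)
    (x y : V) (hxy : x ≠ y) (hG : IsPlanar G) (hsep : IsMinimalSeparator G {x, y})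
    (D : Set V) (hx : x ∈ D) (hy : y ∈ D) (n : ℕ) :
    IsPlanar (ExtGraph G D x y n) :=
  extension_of_minimalSeparator_planar_general G x y hxy hG hsep D n
end

section
/- Let (T, X) be a tree decomposition of a graph G of adhesion at most d, and let i be a node of T. Then for every connected component C of the graph G - X(i), the neighborhood of C in G intersects X(i) in at most d vertices. -/
open SimpleGraph

variable {V : Type*}

/-!
The bags meeting the connected set `C` all avoid `i` and are linked through shared vertices
and edges of `C`, so they lie in a single branch of `T - i`, attached to `i` by an edge `ij`.
A vertex `v ∈ X i` adjacent to some `u ∈ C` shares a bag `X m` with `u`; the subtree of bags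
containing `v` joins `m` to `i` and therefore passes through `j`. Hence the neighbourhood of
`C` in `X i` lies in the adhesion set `X i ∩ X j`.
-/

namespace ReachIn

variable {G : SimpleGraph V} {W W' : Set V} {x y z : V}

lemma trans (hxy : ReachIn G W x y) (hyz : ReachIn G W y z) : ReachIn G W x z := by
  obtain ⟨hx, _, h⟩ := hxy
  obtain ⟨_, hz, h'⟩ := hyz
  exact ⟨hx, hz, h.trans h'⟩

lemma mono (hWW' : W ⊆ W') (h : ReachIn G W x y) : ReachIn G W' x y := by
  obtain ⟨hx, hy, h⟩ := h
  exact ⟨hWW' hx, hWW' hy, h.map (G.induceHomOfLE hWW').toHom⟩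

end ReachIn

lemma reachIn_iff_exists_walk {G : SimpleGraph V} {W : Set V} {x y : V} :
    ReachIn G W x y ↔ ∃ w : G.Walk x y, ∀ z ∈ w.support, z ∈ W := by
  constructor
  · rintro ⟨hx, hy, ⟨w⟩⟩
    refine ⟨w.map (Embedding.induce W).toHom, fun z hz => ?_⟩
    obtain ⟨z', -, rfl⟩ := List.mem_map.mp ((Walk.support_map _ _) ▸ hz)
    exact z'.2
  · rintro ⟨w, hw⟩
    exact ⟨hw x w.start_mem_support, hw y w.end_mem_support, ⟨w.induce W hw⟩⟩

namespace SimpleGraph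

variable {ι : Type*} {T : SimpleGraph ι} {i j k : ι}

lemma Preconnected.exists_adj_reachIn_compl_singleton (hT : T.Preconnected) (hki : k ≠ i) :
    ∃ j, T.Adj i j ∧ ReachIn T {i}ᶜ j k := by
  classical
  obtain ⟨p, hp⟩ := (hT i k).some.toPath
  cases p with
  | nil => exact absurd rfl hki
  | @cons _ j _ hij r =>
    rw [Walk.cons_isPath_iff] at hp
    exact ⟨j, hij, reachIn_iff_exists_walk.mpr ⟨r, fun z hz hzi => hp.2 (hzi ▸ hz)⟩⟩

/-- The unique path from `i` into the branch of `T - i` at the neighbour `j` starts with the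
edge `ij`, and every walk between the same ends contains that path. -/
lemma IsTree.mem_support_of_reachIn (hT : T.IsTree) (hij : T.Adj i j)
    (hjk : ReachIn T {i}ᶜ j k) (q : T.Walk k i) : j ∈ q.support := by
  classical
  obtain ⟨p, hp⟩ := reachIn_iff_exists_walk.mp hjk
  have hpath : (Walk.cons hij p.bypass).IsPath :=
    (Walk.cons_isPath_iff _ _).mpr
      ⟨p.bypass_isPath, fun hi => hp i (p.support_bypass_subset_support hi) rfl⟩
  have hunique : Walk.cons hij p.bypass = q.reverse.bypass := congrArg Subtype.val
    ((hT.isAcyclic.subsingleton_path i k).elim ⟨_, hpath⟩ ⟨_, q.reverse.bypass_isPath⟩)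
  have hj : j ∈ q.reverse.bypass.support := by simp [← hunique]
  simpa [Walk.support_reverse] using q.reverse.support_bypass_subset_support hj

end SimpleGraph

namespace IsTreeDecomp

variable {ι : Type*} {G : SimpleGraph V} {T : SimpleGraph ι} {X : ι → Set V}
  {i j k k' m : ι} {u v : V} {C : Set V}

lemma reachIn_bags (hTD : IsTreeDecomp G T X) (hk : v ∈ X k) (hk' : v ∈ X k') :
    ReachIn T {l | v ∈ X l} k k' :=
  ⟨hk, hk', (hTD.subtree v).preconnected ⟨k, hk⟩ ⟨k', hk'⟩⟩

lemma reachIn_of_mem_bags (hTD : IsTreeDecomp G T X) (hu : u ∉ X i) (hk : u ∈ X k)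
    (hk' : u ∈ X k') : ReachIn T {i}ᶜ k k' :=
  (hTD.reachIn_bags hk hk').mono fun _ hl hli => hu (hli ▸ hl)

lemma reachIn_of_preconnected (hTD : IsTreeDecomp G T X) (hCi : C ⊆ (X i)ᶜ)
    (hC : (G.induce C).Preconnected) (a b : C) (hk : (a : V) ∈ X k) (hk' : (b : V) ∈ X k') :
    ReachIn T {i}ᶜ k k' := by
  obtain ⟨w⟩ := hC a b
  induction w generalizing k with
  | nil => exact hTD.reachIn_of_mem_bags (hCi (Subtype.coe_prop _)) hk hk'
  | @cons x y _ hxy _ ih =>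
    obtain ⟨l, hxl, hyl⟩ := hTD.covers_edges (G.induce_adj.mp hxy)
    exact (hTD.reachIn_of_mem_bags (hCi x.2) hk hxl).trans (ih hyl hk')

lemma mem_of_reachIn (hTD : IsTreeDecomp G T X) (hij : T.Adj i j)
    (hjm : ReachIn T {i}ᶜ j m) (hvm : v ∈ X m) (hvi : v ∈ X i) : v ∈ X j := by
  obtain ⟨q, hq⟩ := reachIn_iff_exists_walk.mp (hTD.reachIn_bags hvm hvi)
  exact hq j (hTD.isTree.mem_support_of_reachIn hij hjm q)

lemma exists_adj_neighbors_subset (hTD : IsTreeDecomp G T X) (hCi : C ⊆ (X i)ᶜ)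
    (hC : (G.induce C).Connected) :
    ∃ j, T.Adj i j ∧ {v ∈ X i | ∃ u ∈ C, G.Adj u v} ⊆ X i ∩ X j := by
  obtain ⟨⟨u₀, hu₀⟩⟩ := hC.nonempty
  obtain ⟨k₀, hk₀⟩ := hTD.covers_verts u₀
  obtain ⟨j, hij, hjk₀⟩ := hTD.isTree.connected.preconnected.exists_adj_reachIn_compl_singleton
    (i := i) (k := k₀) fun h => hCi hu₀ (h ▸ hk₀)
  refine ⟨j, hij, fun v ⟨hvi, u, hu, huv⟩ => ⟨hvi, ?_⟩⟩
  obtain ⟨m, hum, hvm⟩ := hTD.covers_edges huv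
  have hk₀m := hTD.reachIn_of_preconnected hCi hC.preconnected ⟨u₀, hu₀⟩ ⟨u, hu⟩ hk₀ hum
  exact hTD.mem_of_reachIn hij (hjk₀.trans hk₀m) hvm hvi

end IsTreeDecomp

theorem neighbors_of_component_le_adhesion_general [Fintype V] {ι : Type*}
    (G : SimpleGraph V) (T : SimpleGraph ι) (X : ι → Set V)
    (hTD : IsTreeDecomp G T X) (d : ℕ) (hadh : AdhesionLE T X d)
    (i : ι) (C : Set V) (hC : IsCompOf G C (X i)ᶜ) :
    ({v ∈ X i | ∃ u ∈ C, G.Adj u v}).ncard ≤ d := by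
  obtain ⟨j, hij, hsub⟩ := hTD.exists_adj_neighbors_subset hC.1 hC.2.1
  exact (Set.ncard_le_ncard hsub).trans (hadh hij)

/-- If `(T, X)` has adhesion at most `d` and `C` is a connected component of `G - X(i)`,
then the neighborhood of `C` meets `X(i)` in at most `d` vertices. -/
theorem neighbors_of_component_le_adhesion [Fintype V] {ι : Type*} [Fintype ι]
    (G : SimpleGraph V) (T : SimpleGraph ι) (X : ι → Set V)
    (hTD : IsTreeDecomp G T X) (d : ℕ) (hadh : AdhesionLE T X d)
    (i : ι) (C : Set V) (hC : IsCompOf G C (X i)ᶜ) :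
    ({v ∈ X i | ∃ u ∈ C, G.Adj u v}).ncard ≤ d :=
  neighbors_of_component_le_adhesion_general G T X hTD d hadh i C hC
end

section
/- Let (T, X) be a tree decomposition of a graph G, let i be a node of T, and let U be a vertex subset of G. If G[U] - X(i) has at most ℓ connected components, then there are at most ℓ trees T_1, ..., T_{ℓ'} in the forest T - {i} such that every node j whose bag X(j) contains a vertex of U \ X(i) belongs to one of these trees. -/
open SimpleGraph

variable {V : Type*}

lemma reachIn_mono {G : SimpleGraph V} {W W' : Set V} (h : W ⊆ W') {x y : V} :
    ReachIn G W x y → ReachIn G W' x y := by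
  rintro ⟨hx, hy, hr⟩
  refine ⟨h hx, h hy, ?_⟩
  exact hr.map (⟨fun a => ⟨a.1, h a.2⟩, fun ha => ha⟩ : G.induce W →g G.induce W')

lemma reachIn_trans {G : SimpleGraph V} {W : Set V} {x y z : V} :
    ReachIn G W x y → ReachIn G W y z → ReachIn G W x z := by
  rintro ⟨hx, hy, h1⟩ ⟨hy', hz, h2⟩
  exact ⟨hx, hz, h1.trans h2⟩

lemma bags_reach {ι : Type*} {G : SimpleGraph V} {T : SimpleGraph ι} {X : ι → Set V}
    (hTD : IsTreeDecomp G T X) {i : ι} {v : V} (hv : v ∉ X i) {j k : ι}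
    (hj : v ∈ X j) (hk : v ∈ X k) : ReachIn T {i}ᶜ j k := by
  have hsub : {m | v ∈ X m} ⊆ ({i}ᶜ : Set ι) := by
    intro m hm hmi
    exact hv (by simpa [Set.mem_singleton_iff.mp hmi] using hm)
  have hr := (hTD.subtree v).preconnected ⟨j, hj⟩ ⟨k, hk⟩
  exact reachIn_mono hsub ⟨hj, hk, hr⟩

lemma walk_bags_reach {ι : Type*} {G : SimpleGraph V} {T : SimpleGraph ι} {X : ι → Set V}
    (hTD : IsTreeDecomp G T X) {i : ι} {U : Set V} :
    ∀ {a b : ↑(U \ X i)} (_ : (G.induce (U \ X i)).Walk a b) {j k : ι},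
      (a : V) ∈ X j → (b : V) ∈ X k → j ≠ i → k ≠ i → ReachIn T {i}ᶜ j k := by
  intro a b p
  induction p with
  | @nil w =>
    intro j k hj hk hji hki
    exact bags_reach hTD w.2.2 hj hk
  | @cons x y z h p ih =>
    intro j k hj hk hji hki
    obtain ⟨m, ham, hcm⟩ := hTD.covers_edges h
    have hmi : m ≠ i := fun e => y.2.2 (e ▸ hcm)
    exact reachIn_trans (bags_reach hTD x.2.2 hj ham) (ih hcm hk hmi hki)

/-- If `G[U] - X(i)` has at most `ℓ` connected components, then at most `ℓ` trees of the
forest `T - {i}` contain all the nodes whose bags meet `U \ X(i)`. -/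
theorem numberComponents_numberSubtrees [Fintype V] {ι : Type*} [Fintype ι]
    (G : SimpleGraph V) (T : SimpleGraph ι) (X : ι → Set V)
    (hTD : IsTreeDecomp G T X) (i : ι) (U : Set V) (ℓ : ℕ)
    (hcomp : ∃ R : Finset V, R.card ≤ ℓ ∧
      ∀ v ∈ U \ X i, ∃ r ∈ R, ReachIn G (U \ X i) r v) :
    ∃ Q : Finset ι, Q.card ≤ ℓ ∧ (∀ q ∈ Q, q ≠ i) ∧
      ∀ j : ι, (X j ∩ (U \ X i)).Nonempty → ∃ q ∈ Q, ReachIn T {i}ᶜ q j := by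
  classical
  obtain ⟨R, hRcard, hR⟩ := hcomp
  set f : V → ι := fun v => Classical.choose (hTD.covers_verts v) with hf
  have hfX : ∀ v, v ∈ X (f v) := fun v => Classical.choose_spec (hTD.covers_verts v)
  refine ⟨(R.filter (· ∈ U \ X i)).image f, ?_, ?_, ?_⟩
  · exact le_trans (Finset.card_image_le.trans (Finset.card_filter_le _ _)) hRcard
  · intro q hq
    obtain ⟨r, hr, rfl⟩ := Finset.mem_image.mp hq
    have hrU : r ∈ U \ X i := (Finset.mem_filter.mp hr).2
    exact fun e => hrU.2 (e ▸ hfX r)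
  · intro j ⟨v, hvX, hvU⟩
    obtain ⟨r, hrR, hreach⟩ := hR v hvU
    obtain ⟨hrU, hvU', hw⟩ := hreach
    refine ⟨f r, Finset.mem_image.mpr ⟨r, Finset.mem_filter.mpr ⟨hrR, hrU⟩, rfl⟩, ?_⟩
    obtain ⟨p⟩ := hw
    exact walk_bags_reach hTD p (hfX r) hvX (fun e => hrU.2 (e ▸ hfX r))
      (fun e => hvU.2 (e ▸ hvX))
end

section
/- Let (A, B) be a separation of order two of a graph G with A ∩ B = {x, y}. Let P_A be a maximum-length xy-path in G[A] (with vertex set V(P_A), taken to be empty if no xy-path exists in G[A]). If G has a cycle of length at least k, then G[A] has a cycle of length at least k, or the induced subgraph G[V(P_A) ∪ B] has a cycle of length at least k. -/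
/-! A cycle `C` of `G` that lies neither in `A` nor in `B` meets both `A \ B` and `B \ A`, so it
crosses the separator `{x, y}` twice and passes through both `x` and `y`. Each of the two
`xy`-arcs of `C` avoids the separator in its interior, hence lies in `A` or in `B`, and the two
arcs cannot lie on the same side. Replacing the arc in `A` by the longest `xy`-path `P_A` of
`G[A]` gives a cycle of `G[V(P_A) ∪ B]` that is at least as long as `C`. -/

open SimpleGraph

variable {V : Type*}

namespace SimpleGraph.Walk

variable {G : SimpleGraph V} {s : Set V} {u v x y : V}

lemma length_induce (p : G.Walk u v) (hp : ∀ w ∈ p.support, w ∈ s) :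
    (p.induce s hp).length = p.length :=
  (length_map _ _).symm.trans (congrArg length (map_induce p hp))

lemma IsPath.induce {p : G.Walk u v} (h : p.IsPath) (hp : ∀ w ∈ p.support, w ∈ s) :
    (p.induce s hp).IsPath := by
  rwa [← isPath_map_iff_of_injective (f := (Embedding.induce s).toHom) Subtype.val_injective,
    map_induce]

lemma IsCycle.induce {c : G.Walk v v} (h : c.IsCycle) (hc : ∀ w ∈ c.support, w ∈ s) :
    (c.induce s hc).IsCycle := by
  rwa [← isCycle_map_iff_of_injective (f := (Embedding.induce s).toHom) Subtype.val_injective,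
    map_induce]

lemma IsCycle.exists_induce {c : G.Walk v v} (h : c.IsCycle) (hc : ∀ w ∈ c.support, w ∈ s) :
    ∃ (u : s) (d : (G.induce s).Walk u u), d.IsCycle ∧ d.length = c.length :=
  ⟨_, c.induce s hc, h.induce hc, c.length_induce hc⟩

lemma IsPath.start_notMem_support_tail {p : G.Walk u v} (h : p.IsPath) : u ∉ p.support.tail := by
  have := h.support_nodup
  rw [← cons_tail_support, List.nodup_cons] at this
  exact this.1

lemma IsPath.isCycle_append_of_inter_subset {A B : Set V} {p : G.Walk x y} {q : G.Walk y x}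
    (hp : p.IsPath) (hq : q.IsPath) (hAB : A ∩ B ⊆ {x, y}) (hpA : ∀ w ∈ p.support, w ∈ A)
    (hqB : ∀ w ∈ q.support, w ∈ B) (hlen : 3 ≤ p.length + q.length) :
    (p.append q).IsCycle := by
  refine hp.isCycle_append hq (fun w hwp hwq => ?_) (by omega)
  rcases hAB ⟨hpA w (List.mem_of_mem_tail hwp), hqB w (List.mem_of_mem_tail hwq)⟩ with rfl | rfl
  exacts [hp.start_notMem_support_tail hwp, hq.start_notMem_support_tail hwq]

lemma IsPath.exists_isCycle_induce_union {A B : Set V} {hx : x ∈ A} {hy : y ∈ A}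
    {P : (G.induce A).Walk ⟨x, hx⟩ ⟨y, hy⟩} {q : G.Walk y x} (hP : P.IsPath) (hq : q.IsPath)
    (hAB : A ∩ B ⊆ {x, y}) (hqB : ∀ w ∈ q.support, w ∈ B) (hlen : 3 ≤ P.length + q.length) :
    ∃ (u : ↥(Subtype.val '' {a | a ∈ P.support} ∪ B))
      (d : (G.induce (Subtype.val '' {a | a ∈ P.support} ∪ B)).Walk u u),
      d.IsCycle ∧ d.length = P.length + q.length := by
  set P' : G.Walk x y := P.map (Embedding.induce A).toHom
  have hP'len : P'.length = P.length := length_map _ _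
  have hP'P : ∀ w ∈ P'.support, w ∈ Subtype.val '' {a | a ∈ P.support} := by
    intro w hw
    obtain ⟨a, ha, rfl⟩ := List.mem_map.1 (support_map _ P ▸ hw)
    exact ⟨a, ha, rfl⟩
  have hcyc : (P'.append q).IsCycle :=
    (hP.map Subtype.val_injective).isCycle_append_of_inter_subset hq hAB
      (fun w hw => by obtain ⟨a, -, rfl⟩ := hP'P w hw; exact a.2) hqB (hP'len ▸ hlen)
  obtain ⟨u, d, hd, hdlen⟩ := hcyc.exists_induce (s := Subtype.val '' {a | a ∈ P.support} ∪ B)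
    fun w hw => (mem_support_append_iff _ _).1 hw |>.imp (hP'P w) (hqB w)
  exact ⟨u, d, hd, by rw [hdlen, length_append, hP'len]⟩

lemma IsCycle.exists_isPath_append [DecidableEq V] {c : G.Walk v v} (h : c.IsCycle)
    (hx : x ∈ c.support) (hy : y ∈ c.support) (hxy : x ≠ y) :
    ∃ (p : G.Walk x y) (q : G.Walk y x), p.IsPath ∧ q.IsPath ∧
      (∀ w ∈ p.support, w ∈ q.support → w = x ∨ w = y) ∧ p.length + q.length = c.length ∧
      ∀ w, w ∈ c.support ↔ w ∈ p.support ∨ w ∈ q.support := by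
  obtain ⟨p, q, hpq⟩ := mem_support_iff_exists_append.mp ((c.mem_support_rotate_iff x hx).mpr hy)
  have hc := h.rotate hx
  rw [hpq] at hc
  refine ⟨p, q, hc.isPath_of_append_left (not_nil_of_ne hxy.symm),
    hc.isPath_of_append_right (not_nil_of_ne hxy), fun w hwp hwq => ?_, ?_, fun w => ?_⟩
  · have hdisj := List.disjoint_of_nodup_append (tail_support_append p q ▸ hc.support_nodup)
    by_contra! hw
    exact hdisj (((p.mem_support_iff).mp hwp).resolve_left hw.1)
      (((q.mem_support_iff).mp hwq).resolve_left hw.2)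
  · rw [← length_append, ← hpq, length_rotate]
  · rw [← c.mem_support_rotate_iff x hx, hpq, mem_support_append_iff]

end SimpleGraph.Walk

namespace IsSeparation

open Walk

variable {G : SimpleGraph V} {A B : Set V} {u v x y : V}

lemma symm (h : IsSeparation G A B) : IsSeparation G B A :=
  ⟨Set.union_comm A B ▸ h.1, fun u hu v hv huv => h.2 v hv u hu huv.symm⟩

lemma mem_right_of_notMem_left (h : IsSeparation G A B) (hv : v ∉ A) : v ∈ B :=
  (h.1 ▸ Set.mem_univ v : v ∈ A ∪ B).resolve_left hv

lemma exists_mem_support_inter (h : IsSeparation G A B) (p : G.Walk u v) (hu : u ∈ A)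
    (hv : v ∉ A) : ∃ w ∈ p.support, w ∈ A ∩ B := by
  induction p with
  | nil => exact absurd hu hv
  | @cons u b v hub p ih =>
    by_cases hb : b ∈ A
    · obtain ⟨w, hw, hwAB⟩ := ih hb hv
      exact ⟨w, List.mem_cons_of_mem u hw, hwAB⟩
    by_cases huB : u ∈ B
    · exact ⟨u, List.mem_cons_self, hu, huB⟩
    · exact absurd hub (h.2 u ⟨hu, huB⟩ b ⟨h.mem_right_of_notMem_left hb, hb⟩)

lemma forall_mem_left_of_isPath (h : IsSeparation G A B) (hAB : A ∩ B ⊆ {x, v})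
    {p : G.Walk u v} (hp : p.IsPath) (hu : u ∈ A) (hx : x ∉ p.support) :
    ∀ w ∈ p.support, w ∈ A := by
  classical
  intro w hw
  by_contra hwA
  obtain ⟨t, ht, htAB⟩ := h.exists_mem_support_inter (p.takeUntil w hw) hu hwA
  rcases hAB htAB with rfl | rfl
  · exact hx (p.support_takeUntil_subset_support hw ht)
  · exact endpoint_notMem_support_takeUntil hp hw (fun htw => hwA (htw ▸ htAB.1)) ht

lemma forall_mem_left_or_right_of_isPath (h : IsSeparation G A B) (hAB : A ∩ B = {x, y})
    {p : G.Walk x y} (hp : p.IsPath) :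
    (∀ w ∈ p.support, w ∈ A) ∨ (∀ w ∈ p.support, w ∈ B) := by
  have hx : x ∈ A ∩ B := hAB ▸ Set.mem_insert x {y}
  cases p with
  | nil => simp [hx.1]
  | @cons _ z _ _ q =>
    rw [cons_isPath_iff] at hp
    rcases (h.1 ▸ Set.mem_univ z : z ∈ A ∪ B) with hz | hz
    · left
      simpa [hx.1] using h.forall_mem_left_of_isPath hAB.le hp.1 hz hp.2
    · right
      simpa [hx.2] using
        h.symm.forall_mem_left_of_isPath (Set.inter_comm B A ▸ hAB.le) hp.1 hz hp.2

lemma exists_ne_mem_inter_of_isCycle (h : IsSeparation G A B) {c : G.Walk v v}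
    (hc : c.IsCycle) {a b : V} (ha : a ∈ c.support) (haA : a ∉ A) (hb : b ∈ c.support)
    (hbB : b ∉ B) : ∃ s ∈ c.support, ∃ t ∈ c.support, s ≠ t ∧ s ∈ A ∩ B ∧ t ∈ A ∩ B := by
  classical
  have hbA : b ∈ A := h.symm.mem_right_of_notMem_left hbB
  obtain ⟨p, q, -, -, hpq, -, hmem⟩ := hc.exists_isPath_append hb ha (fun hba => haA (hba ▸ hbA))
  obtain ⟨s, hs, hsAB⟩ := h.exists_mem_support_inter p hbA haA
  obtain ⟨t, ht, htAB⟩ := h.symm.exists_mem_support_inter q (h.mem_right_of_notMem_left haA) hbB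
  refine ⟨s, (hmem s).2 (.inl hs), t, (hmem t).2 (.inr ht), ?_, hsAB, htAB.symm⟩
  rintro rfl
  rcases hpq s hs ht with rfl | rfl
  exacts [hbB hsAB.2, haA hsAB.1]

lemma exists_isPath_left_right_of_isCycle (h : IsSeparation G A B) (hAB : A ∩ B = {x, y})
    (hxy : x ≠ y) {c : G.Walk v v} (hc : c.IsCycle) (hA : ∃ a ∈ c.support, a ∉ A)
    (hB : ∃ b ∈ c.support, b ∉ B) :
    ∃ (p : G.Walk x y) (q : G.Walk y x), p.IsPath ∧ q.IsPath ∧ (∀ w ∈ p.support, w ∈ A) ∧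
      (∀ w ∈ q.support, w ∈ B) ∧ p.length + q.length = c.length := by
  classical
  obtain ⟨a, ha, haA⟩ := hA
  obtain ⟨b, hb, hbB⟩ := hB
  have hxy_mem : x ∈ c.support ∧ y ∈ c.support := by
    obtain ⟨s, hs, t, ht, hst, hsAB, htAB⟩ := h.exists_ne_mem_inter_of_isCycle hc ha haA hb hbB
    rw [hAB, Set.mem_insert_iff, Set.mem_singleton_iff] at hsAB htAB
    rcases hsAB with rfl | rfl <;> rcases htAB with rfl | rfl
    exacts [absurd rfl hst, ⟨hs, ht⟩, ⟨ht, hs⟩, absurd rfl hst]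
  obtain ⟨p, q, hp, hq, -, hlen, hmem⟩ := hc.exists_isPath_append hxy_mem.1 hxy_mem.2 hxy
  have not_same_side (S : Set V) (w : V) (hw : w ∈ c.support) (hwS : w ∉ S) :
      ¬ ((∀ w ∈ p.support, w ∈ S) ∧ ∀ w ∈ q.support, w ∈ S) := fun ⟨hpS, hqS⟩ =>
    hwS ((hmem w).1 hw |>.elim (hpS w) (hqS w))
  rcases h.forall_mem_left_or_right_of_isPath hAB hp with hpA | hpB <;>
    rcases h.forall_mem_left_or_right_of_isPath (Set.pair_comm x y ▸ hAB) hq with hqA | hqB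
  · exact absurd ⟨hpA, hqA⟩ (not_same_side A a ha haA)
  · exact ⟨p, q, hp, hq, hpA, hqB, hlen⟩
  · refine ⟨q.reverse, p.reverse, hq.reverse, hp.reverse, ?_, ?_, ?_⟩
    · simpa using hqA
    · simpa using hpB
    · simp [← hlen, add_comm]
  · exact absurd ⟨hpB, hqB⟩ (not_same_side B b hb hbB)

end IsSeparation

theorem cycles_through_separation_general (G : SimpleGraph V) (k : ℕ)
    (A B : Set V) (x y : V) (hsep : IsSeparation G A B) (hAB : A ∩ B = {x, y})
    (hxy : x ≠ y) (hxA : x ∈ A) (hyA : y ∈ A) (SP : Set V)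
    (hSP : (∃ p : (G.induce A).Walk ⟨x, hxA⟩ ⟨y, hyA⟩, p.IsPath ∧
        (∀ q : (G.induce A).Walk ⟨x, hxA⟩ ⟨y, hyA⟩, q.IsPath → q.length ≤ p.length) ∧
        SP = Subtype.val '' {a | a ∈ p.support}) ∨
      ((¬ ∃ p : (G.induce A).Walk ⟨x, hxA⟩ ⟨y, hyA⟩, p.IsPath) ∧ SP = ∅))
    (hk : ∃ (v : V) (c : G.Walk v v), c.IsCycle ∧ k ≤ c.length) :
    (∃ (v : A) (c : (G.induce A).Walk v v), c.IsCycle ∧ k ≤ c.length) ∨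
    (∃ (v : ↥(SP ∪ B)) (c : (G.induce (SP ∪ B)).Walk v v), c.IsCycle ∧ k ≤ c.length) := by
  obtain ⟨v, c, hc, hck⟩ := hk
  by_cases hcA : ∀ w ∈ c.support, w ∈ A
  · obtain ⟨u, d, hd, hlen⟩ := hc.exists_induce hcA
    exact .inl ⟨u, d, hd, hlen ▸ hck⟩
  by_cases hcB : ∀ w ∈ c.support, w ∈ B
  · obtain ⟨u, d, hd, hlen⟩ := hc.exists_induce (s := SP ∪ B) fun w hw => .inr (hcB w hw)
    exact .inr ⟨u, d, hd, hlen ▸ hck⟩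
  push Not at hcA hcB
  obtain ⟨pA, pB, hpA, hpB, hpAA, hpBB, hlen⟩ :=
    hsep.exists_isPath_left_right_of_isCycle hAB hxy hc hcA hcB
  obtain ⟨P, hP, hPmax, rfl⟩ := hSP.resolve_right fun h => h.1 ⟨_, hpA.induce hpAA⟩
  have hPlen := Walk.length_induce pA hpAA ▸ hPmax _ (hpA.induce hpAA)
  obtain ⟨u, d, hd, hdlen⟩ := hP.exists_isCycle_induce_union hpB hAB.le hpBB (by
    have := hc.three_le_length; omega)
  exact .inr ⟨u, d, hd, by omega⟩

/-- Reducing a `k`-cycle across a separation of order two: if `G` has a cycle of length at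
least `k`, and `P_A` is a maximum-length `xy`-path in `G[A]` (empty if none exists),
then `G[A]` or `G[V(P_A) ∪ B]` has a cycle of length at least `k`. -/
theorem cycles_through_separation [Fintype V] (G : SimpleGraph V) (k : ℕ)
    (A B : Set V) (x y : V) (hsep : IsSeparation G A B) (hAB : A ∩ B = {x, y})
    (hxy : x ≠ y) (hxA : x ∈ A) (hyA : y ∈ A) (SP : Set V)
    (hSP : (∃ p : (G.induce A).Walk ⟨x, hxA⟩ ⟨y, hyA⟩, p.IsPath ∧
        (∀ q : (G.induce A).Walk ⟨x, hxA⟩ ⟨y, hyA⟩, q.IsPath → q.length ≤ p.length) ∧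
        SP = Subtype.val '' {a | a ∈ p.support}) ∨
      ((¬ ∃ p : (G.induce A).Walk ⟨x, hxA⟩ ⟨y, hyA⟩, p.IsPath) ∧ SP = ∅))
    (hk : ∃ (v : V) (c : G.Walk v v), c.IsCycle ∧ k ≤ c.length) :
    (∃ (v : A) (c : (G.induce A).Walk v v), c.IsCycle ∧ k ≤ c.length) ∨
    (∃ (v : ↥(SP ∪ B)) (c : (G.induce (SP ∪ B)).Walk v v), c.IsCycle ∧ k ≤ c.length) :=
  cycles_through_separation_general G k A B x y hsep hAB hxy hxA hyA SP hSP hk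
end

section
/- Let (A, B) be a separation of order one of a graph G with A ∩ B = {x}. Let P_A be a maximum-length path in G[A] that has x as an endpoint. If G has a path of length at least k, then G[A] has a path of length at least k, or the induced subgraph G[V(P_A) ∪ B] has a path of length at least k. -/
open SimpleGraph

variable {V : Type*}

namespace PTCAux

open SimpleGraph

def restrictWalk {G : SimpleGraph V} {W : Set V} :
    ∀ {u v : V} (p : G.Walk u v) (h : ∀ a ∈ p.support, a ∈ W),
      (G.induce W).Walk ⟨u, h u p.start_mem_support⟩ ⟨v, h v p.end_mem_support⟩
  | _, _, SimpleGraph.Walk.nil, _ => SimpleGraph.Walk.nil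
  | _, _, @SimpleGraph.Walk.cons _ _ u c v hadj q, h =>
      SimpleGraph.Walk.cons
        (show (G.induce W).Adj ⟨u, h u (by simp)⟩ ⟨c, h c (by simp)⟩ from hadj)
        (restrictWalk q (fun a ha => h a (by simp [SimpleGraph.Walk.support_cons, ha])))

lemma support_restrict {G : SimpleGraph V} {W : Set V} :
    ∀ {u v : V} (p : G.Walk u v) (h : ∀ a ∈ p.support, a ∈ W),
      (restrictWalk p h).support.map Subtype.val = p.support
  | _, _, SimpleGraph.Walk.nil, _ => rfl
  | _, _, @SimpleGraph.Walk.cons _ _ u c v hadj q, h => by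
      simp [restrictWalk, SimpleGraph.Walk.support_cons, support_restrict q]

lemma length_restrict {G : SimpleGraph V} {W : Set V} :
    ∀ {u v : V} (p : G.Walk u v) (h : ∀ a ∈ p.support, a ∈ W),
      (restrictWalk p h).length = p.length
  | _, _, SimpleGraph.Walk.nil, _ => rfl
  | _, _, @SimpleGraph.Walk.cons _ _ u c v hadj q, h => by
      simp [restrictWalk, length_restrict q]

lemma isPath_restrict {G : SimpleGraph V} {W : Set V} {u v : V} (p : G.Walk u v)
    (h : ∀ a ∈ p.support, a ∈ W) (hp : p.IsPath) : (restrictWalk p h).IsPath := by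
  rw [SimpleGraph.Walk.isPath_def]
  have := hp.support_nodup
  rw [← support_restrict p h] at this
  exact this.of_map _

lemma stay {G : SimpleGraph V} {A B : Set V} {x : V}
    (hsep : IsSeparation G A B) (hAB : A ∩ B = {x}) :
    ∀ {a b : V} (q : G.Walk a b), a ∈ A → x ∉ q.support → ∀ w ∈ q.support, w ∈ A := by
  intro a b q
  induction q with
  | nil => intro ha _ w hw; simp at hw; subst hw; exact ha
  | @cons a c b hadj q ih =>
    intro ha hx w hw
    have hax : a ≠ x := fun h => hx (by simp [h])
    have haB : a ∉ B := fun hB => hax (by have : a ∈ A ∩ B := ⟨ha, hB⟩; rwa [hAB] at this)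
    have hcA : c ∈ A := by
      by_contra hcA
      have hcB : c ∈ B := by
        have hcu : c ∈ A ∪ B := by rw [hsep.1]; trivial
        exact hcu.resolve_left hcA
      exact hsep.2 a ⟨ha, haB⟩ c ⟨hcB, hcA⟩ hadj
    rw [SimpleGraph.Walk.support_cons] at hw
    rcases List.mem_cons.1 hw with hw | hw
    · exact hw ▸ ha
    · exact ih hcA (fun h => hx (by simp [h])) w hw

lemma sepSymm {G : SimpleGraph V} {A B : Set V} (hsep : IsSeparation G A B) :
    IsSeparation G B A :=
  ⟨by rw [Set.union_comm]; exact hsep.1, fun u hu v hv h => hsep.2 v hv u hu h.symm⟩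

lemma side {G : SimpleGraph V} {A B : Set V} {x : V}
    (hsep : IsSeparation G A B) (hAB : A ∩ B = {x}) (hxA : x ∈ A) (hxB : x ∈ B) :
    ∀ {v : V} (R : G.Walk x v), R.IsPath →
      (∀ w ∈ R.support, w ∈ A) ∨ (∀ w ∈ R.support, w ∈ B) := by
  intro v R hR
  cases R with
  | nil => exact Or.inl (by intro w hw; simp at hw; subst hw; exact hxA)
  | @cons _ c _ hadj q =>
    have hxq : x ∉ q.support := by
      have := hR.support_nodup
      rw [SimpleGraph.Walk.support_cons] at this
      exact (List.nodup_cons.1 this).1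
    by_cases hcA : c ∈ A
    · left
      intro w hw
      rw [SimpleGraph.Walk.support_cons] at hw
      rcases List.mem_cons.1 hw with hw | hw
      · exact hw ▸ hxA
      · exact stay hsep hAB q hcA hxq w hw
    · have hcB : c ∈ B := by
        have hcu : c ∈ A ∪ B := by rw [hsep.1]; trivial
        exact hcu.resolve_left hcA
      right
      intro w hw
      rw [SimpleGraph.Walk.support_cons] at hw
      rcases List.mem_cons.1 hw with hw | hw
      · exact hw ▸ hxB
      · exact stay (sepSymm hsep) (by rw [Set.inter_comm]; exact hAB) q hcB hxq w hw

end PTCAux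


/-- Reducing a `k`-path across a separation of order one: if `G` has a path of length at
least `k` and `P_A` is a maximum-length `x`-path in `G[A]`, then `G[A]` or
`G[V(P_A) ∪ B]` has a path of length at least `k`. -/
theorem paths_through_cutvertex [Fintype V] (G : SimpleGraph V) (k : ℕ)
    (A B : Set V) (x : V) (hsep : IsSeparation G A B) (hAB : A ∩ B = {x}) (hxA : x ∈ A)
    (z : A) (p : (G.induce A).Walk ⟨x, hxA⟩ z) (hp : p.IsPath)
    (hmax : ∀ (w : A) (q : (G.induce A).Walk ⟨x, hxA⟩ w), q.IsPath → q.length ≤ p.length)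
    (hk : ∃ (u v : V) (P : G.Walk u v), P.IsPath ∧ k ≤ P.length) :
    (∃ (u v : A) (P : (G.induce A).Walk u v), P.IsPath ∧ k ≤ P.length) ∨
    (∃ (u v : ↥(Subtype.val '' {a | a ∈ p.support} ∪ B))
      (P : (G.induce (Subtype.val '' {a | a ∈ p.support} ∪ B)).Walk u v),
        P.IsPath ∧ k ≤ P.length) := by
  classical
  obtain ⟨u, v, P, hP, hkP⟩ := hk
  set S : Set V := Subtype.val '' {a | a ∈ p.support} with hS
  have hxB : x ∈ B := by
    have : x ∈ A ∩ B := by rw [hAB]; exact Set.mem_singleton x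
    exact this.2
  -- left finisher
  have finishLeft : ∀ {a b : V} (Q : G.Walk a b), Q.IsPath →
      (hQA : ∀ w ∈ Q.support, w ∈ A) → k ≤ Q.length →
      (∃ (u v : A) (P : (G.induce A).Walk u v), P.IsPath ∧ k ≤ P.length) := by
    intro a b Q hQ hQA hlen
    exact ⟨_, _, PTCAux.restrictWalk Q hQA, PTCAux.isPath_restrict Q hQA hQ,
      by rw [PTCAux.length_restrict]; exact hlen⟩
  -- generic right finisher (any path inside S ∪ B)
  have finishRightGen : ∀ {a b : V} (Q : G.Walk a b), Q.IsPath →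
      (hQB : ∀ w ∈ Q.support, w ∈ S ∪ B) → k ≤ Q.length →
      (∃ (u v : ↥(S ∪ B)) (P : (G.induce (S ∪ B)).Walk u v), P.IsPath ∧ k ≤ P.length) := by
    intro a b Q hQ hQB hlen
    exact ⟨_, _, PTCAux.restrictWalk Q hQB, PTCAux.isPath_restrict Q hQB hQ,
      by rw [PTCAux.length_restrict]; exact hlen⟩
  -- bound: any x-path inside A has length at most p.length
  have boundA : ∀ {a : V} (Q : G.Walk a x), Q.IsPath →
      (∀ w ∈ Q.support, w ∈ A) → Q.length ≤ p.length := by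
    intro a Q hQ hQA
    have hmem : ∀ w ∈ Q.reverse.support, w ∈ A := by
      simpa [SimpleGraph.Walk.support_reverse] using hQA
    calc Q.length = (PTCAux.restrictWalk Q.reverse hmem).length := by
          rw [PTCAux.length_restrict, SimpleGraph.Walk.length_reverse]
      _ ≤ p.length := hmax _ _ (PTCAux.isPath_restrict _ hmem hQ.reverse)
  -- right finisher from an x-path inside B
  have finishRight : ∀ {b : V} (R : G.Walk x b), R.IsPath →
      (∀ w ∈ R.support, w ∈ B) → k ≤ p.length + R.length →
      (∃ (u v : ↥(S ∪ B)) (P : (G.induce (S ∪ B)).Walk u v), P.IsPath ∧ k ≤ P.length) := by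
    intro b R hR hRB hlen
    let ι : G.induce A →g G := ⟨Subtype.val, fun h => h⟩
    have hinj : Function.Injective ι := Subtype.val_injective
    let pG : G.Walk x (z : V) := p.map ι
    have hpG : pG.IsPath := SimpleGraph.Walk.map_isPath_of_injective hinj hp
    have hpGsupp : ∀ w ∈ pG.support, w ∈ S := by
      intro w hw
      rw [SimpleGraph.Walk.support_map] at hw
      rcases List.mem_map.1 hw with ⟨a, ha, rfl⟩
      exact ⟨a, ha, rfl⟩
    have hRtail : R.support = x :: R.support.tail := R.support_eq_cons
    have hRnodup := hR.support_nodup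
    rw [hRtail] at hRnodup
    have hxtail : x ∉ R.support.tail := (List.nodup_cons.1 hRnodup).1
    have htailnodup : R.support.tail.Nodup := (List.nodup_cons.1 hRnodup).2
    let W0 : G.Walk (z : V) b := pG.reverse.append R
    have hW0supp : W0.support = pG.reverse.support ++ R.support.tail :=
      SimpleGraph.Walk.support_append _ _
    have hW0 : W0.IsPath := by
      rw [SimpleGraph.Walk.isPath_def, hW0supp]
      refine List.Nodup.append ?_ htailnodup ?_
      · rw [SimpleGraph.Walk.support_reverse]
        exact List.nodup_reverse.2 hpG.support_nodup
      · intro w hw1 hw2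
        rw [SimpleGraph.Walk.support_reverse, List.mem_reverse] at hw1
        have hwA : w ∈ A := by
          rcases hpGsupp w hw1 with ⟨a, _, rfl⟩
          exact a.2
        have hwB : w ∈ B := hRB w (by rw [hRtail]; exact List.mem_cons_of_mem _ hw2)
        have : w = x := by
          have : w ∈ A ∩ B := ⟨hwA, hwB⟩
          rwa [hAB] at this
        exact hxtail (this ▸ hw2)
    have hW0sub : ∀ w ∈ W0.support, w ∈ S ∪ B := by
      intro w hw
      rw [hW0supp, List.mem_append] at hw
      rcases hw with hw | hw
      · rw [SimpleGraph.Walk.support_reverse, List.mem_reverse] at hw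
        exact Or.inl (hpGsupp w hw)
      · exact Or.inr (hRB w (by rw [hRtail]; exact List.mem_cons_of_mem _ hw))
    have hW0len : W0.length = p.length + R.length := by
      simp [W0, SimpleGraph.Walk.length_append, SimpleGraph.Walk.length_reverse,
        SimpleGraph.Walk.length_map, pG]
    exact finishRightGen W0 hW0 hW0sub (by rw [hW0len]; exact hlen)
  by_cases hxP : x ∈ P.support
  · have hQ1 : (P.takeUntil x hxP).IsPath := hP.takeUntil hxP
    have hQ2 : (P.dropUntil x hxP).IsPath := hP.dropUntil hxP
    have hlen : (P.takeUntil x hxP).length + (P.dropUntil x hxP).length = P.length := by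
      rw [← SimpleGraph.Walk.length_append, SimpleGraph.Walk.take_spec]
    rcases PTCAux.side hsep hAB hxA hxB (P.takeUntil x hxP).reverse hQ1.reverse with h1 | h1 <;>
      rcases PTCAux.side hsep hAB hxA hxB (P.dropUntil x hxP) hQ2 with h2 | h2
    · refine Or.inl (finishLeft P hP ?_ hkP)
      intro w hw
      rw [← SimpleGraph.Walk.take_spec P hxP, SimpleGraph.Walk.mem_support_append_iff] at hw
      rcases hw with hw | hw
      · exact h1 w (by simpa [SimpleGraph.Walk.support_reverse] using hw)
      · exact h2 w hw
    · have hb := boundA (P.takeUntil x hxP) hQ1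
        (fun w hw => h1 w (by simpa [SimpleGraph.Walk.support_reverse] using hw))
      exact Or.inr (finishRight (P.dropUntil x hxP) hQ2 h2 (by omega))
    · have hb := boundA (P.dropUntil x hxP).reverse hQ2.reverse
        (by simpa [SimpleGraph.Walk.support_reverse] using h2)
      rw [SimpleGraph.Walk.length_reverse] at hb
      refine Or.inr (finishRight (P.takeUntil x hxP).reverse hQ1.reverse h1 ?_)
      rw [SimpleGraph.Walk.length_reverse]
      omega
    · refine Or.inr (finishRightGen P hP ?_ hkP)
      intro w hw
      rw [← SimpleGraph.Walk.take_spec P hxP, SimpleGraph.Walk.mem_support_append_iff] at hw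
      rcases hw with hw | hw
      · exact Or.inr (h1 w (by simpa [SimpleGraph.Walk.support_reverse] using hw))
      · exact Or.inr (h2 w hw)
  · have hu : u ∈ A ∪ B := by rw [hsep.1]; trivial
    rcases hu with hu | hu
    · exact Or.inl (finishLeft P hP (PTCAux.stay hsep hAB P hu hxP) hkP)
    · refine Or.inr (finishRightGen P hP ?_ hkP)
      intro w hw
      exact Or.inr (PTCAux.stay (PTCAux.sepSymm hsep)
        (by rw [Set.inter_comm]; exact hAB) P hu hxP w hw)
end

section
/- Let (T, X) be a tree decomposition of adhesion at most two of a graph G. If G is claw-free, then for every node i of T the torso of the bag X(i) is claw-free. -/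
open SimpleGraph

variable {V : Type*}

def ReachesFromOutside (G : SimpleGraph V) (W : Set V) (u w : V) : Prop :=
  ∃ p : G.Walk u w, ∀ z ∈ p.support, z ≠ w → z ∉ W

section Torso

variable {G : SimpleGraph V} {W : Set V}

theorem torso_adj_iff {x y : W} :
    (torso G W).Adj x y ↔ (x : V) ≠ y ∧
      ∃ p : G.Walk x y, p.IsPath ∧ ∀ z ∈ p.support, z ≠ (x : V) → z ≠ (y : V) → z ∉ W := by
  have adj_path {u v : V} (h : G.Adj u v) :
      ∃ p : G.Walk u v, p.IsPath ∧ ∀ z ∈ p.support, z ≠ u → z ≠ v → z ∉ W :=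
    ⟨h.toWalk, Walk.IsPath.of_adj h, by simp +contextual⟩
  rw [torso, fromRel_adj, Subtype.coe_ne_coe]
  refine and_congr_right fun _ => ⟨?_, fun h => .inl (.inr h)⟩
  rintro ((h | h) | (h | ⟨p, hp, havoid⟩))
  · exact adj_path h
  · exact h
  · exact adj_path h.symm
  · refine ⟨p.reverse, hp.reverse, fun z hz hzx hzy => havoid z ?_ hzy hzx⟩
    rwa [Walk.support_reverse, List.mem_reverse] at hz

theorem torso_adj_of_walk [DecidableEq V] {x y : W} (hxy : x ≠ y) (p : G.Walk x y)
    (hp : ∀ z ∈ p.support, z ≠ (x : V) → z ≠ (y : V) → z ∉ W) : (torso G W).Adj x y :=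
  torso_adj_iff.mpr ⟨Subtype.coe_ne_coe.mpr hxy, p.toPath, p.toPath.2,
    fun z hz => hp z (p.support_toPath_subset_support hz)⟩

theorem exists_adj_reachesFromOutside {v a : V} (hva : v ≠ a) (p : G.Walk v a) (hp : p.IsPath)
    (havoid : ∀ z ∈ p.support, z ≠ v → z ≠ a → z ∉ W) :
    ∃ a', G.Adj v a' ∧ ReachesFromOutside G W a' a := by
  cases p with
  | nil => exact absurd rfl hva
  | @cons _ a' _ hadj q =>
    rw [Walk.cons_isPath_iff] at hp
    refine ⟨a', hadj, q, fun z hz hza => havoid z (List.mem_cons_of_mem _ hz) ?_ hza⟩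
    rintro rfl
    exact hp.2 hz

theorem exists_adj_reachesFromOutside_of_torso_adj {v a : W} (h : (torso G W).Adj v a) :
    ∃ a', G.Adj v a' ∧ ReachesFromOutside G W a' a :=
  let ⟨hva, p, hp, havoid⟩ := torso_adj_iff.mp h
  exists_adj_reachesFromOutside hva p hp havoid

theorem torso_adj_of_reachesFromOutside {a b : W} (hab : a ≠ b) {u w : V}
    (hu : ReachesFromOutside G W u a) (hw : ReachesFromOutside G W w b)
    (huw : u = w ∨ G.Adj u w) : (torso G W).Adj a b := by
  classical
  obtain ⟨q, hq⟩ := hu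
  obtain ⟨r, hr⟩ := hw
  obtain ⟨p, hp⟩ : ∃ p : G.Walk a b, ∀ z ∈ p.support, z ∈ q.support ∨ z ∈ r.support := by
    rcases huw with rfl | huw
    · refine ⟨q.reverse.append r, fun z hz => ?_⟩
      rw [Walk.support_append, List.mem_append, Walk.support_reverse, List.mem_reverse] at hz
      exact hz.imp_right List.mem_of_mem_tail
    · refine ⟨q.reverse.append (.cons huw r), fun z hz => ?_⟩
      rwa [Walk.support_append, List.mem_append, Walk.support_reverse, List.mem_reverse,
        Walk.support_cons, List.tail_cons] at hz
  refine torso_adj_of_walk hab p fun z hz hza hzb => ?_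
  rcases hp z hz with hz | hz
  exacts [hq z hz hza, hr z hz hzb]

/-- The first edges of the torso paths leaving a claw centre form a claw in `G`: a shortcut
between two of their ends would give a torso edge between the corresponding leaves. -/
theorem ClawFree.torso (hcf : ClawFree G) (W : Set V) : ClawFree (torso G W) := by
  intro v a b c hva hvb hvc hab hac hbc hnab hnac
  by_contra hnbc
  obtain ⟨a', hva', ha'⟩ := exists_adj_reachesFromOutside_of_torso_adj hva
  obtain ⟨b', hvb', hb'⟩ := exists_adj_reachesFromOutside_of_torso_adj hvb
  obtain ⟨c', hvc', hc'⟩ := exists_adj_reachesFromOutside_of_torso_adj hvc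
  obtain ⟨hab', hnab'⟩ := not_or.mp (hnab ∘ torso_adj_of_reachesFromOutside hab ha' hb')
  obtain ⟨hac', hnac'⟩ := not_or.mp (hnac ∘ torso_adj_of_reachesFromOutside hac ha' hc')
  obtain ⟨hbc', hnbc'⟩ := not_or.mp (hnbc ∘ torso_adj_of_reachesFromOutside hbc hb' hc')
  exact hnbc' (hcf v a' b' c' hva' hvb' hvc' hab' hac' hbc' hnab' hnac')

end Torso

theorem torso_clawFree_general {ι : Type*}
    (G : SimpleGraph V) (X : ι → Set V)
    (hcf : ClawFree G) (i : ι) :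
    ClawFree (torso G (X i)) :=
  hcf.torso (X i)

/-- If `(T, X)` is a tree decomposition of adhesion at most two of a claw-free graph `G`,
then every torso of a bag is claw-free. -/
theorem torso_clawFree [Fintype V] {ι : Type*} [Fintype ι]
    (G : SimpleGraph V) (T : SimpleGraph ι) (X : ι → Set V)
    (hTD : IsTreeDecomp G T X) (hadh : AdhesionLE T X 2)
    (hcf : ClawFree G) (i : ι) :
    ClawFree (torso G (X i)) :=
  torso_clawFree_general G X hcf i
end
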